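/- arXiv:2402.09232 — 7 statements merged into one kernel-verified Lean document; each statement's English description precedes it below -/
import Mathlib

section
/- For every integer d ≥ 0 there exists a sequence of nonempty strings (T_m) with |T_m| → ∞ such that g_it(d)(T_m) = o(ℓ(T_m)), i.e., g_it(d)(T_m)/ℓ(T_m) → 0 as m → ∞. -/
/-- Rules of an iterated SLP over alphabet `α` with variables `Fin N`. -/
inductive ISLPRule (α : Type) (N : ℕ) : Type
  | term (a : α)
  | pair (B C : Fin N)
  | iter (k1 k2 : ℕ) (Bs : List (Fin N × ℕ))

namespace ISLPRule

variable {α : Type} {N : ℕ}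

/-- Variables occurring in the right-hand side of a rule. -/
def vars : ISLPRule α N → List (Fin N)
  | .term _ => []
  | .pair B C => [B, C]
  | .iter _ _ Bs => Bs.map Prod.fst

/-- The size of a rule: 1 for `A → a`, 2 for `A → BC`, `2 + 2t` for iteration rules. -/
def size : ISLPRule α N → ℕ
  | .term _ => 1
  | .pair _ _ => 2
  | .iter _ _ Bs => 2 + 2 * Bs.length

/-- Validity of a rule in a `d`-ISLP: in iteration rules, `k1, k2 ≥ 1`,
`t ≥ 1` and all exponents `c_j` satisfy `c_j ≤ d`. -/
def Ok (d : ℕ) : ISLPRule α N → Prop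
  | .term _ => True
  | .pair _ _ => True
  | .iter k1 k2 Bs => 1 ≤ k1 ∧ 1 ≤ k2 ∧ Bs ≠ [] ∧ ∀ p ∈ Bs, p.2 ≤ d

/-- A rule is an SLP rule if it is of the form `A → a` or `A → BC`. -/
def isSLP : ISLPRule α N → Prop
  | .term _ => True
  | .pair _ _ => True
  | .iter _ _ _ => False

end ISLPRule

/-- `w` repeated `k` times, i.e. `w^k`. -/
def repList {α : Type} (w : List α) (k : ℕ) : List α := (List.replicate k w).flatten

/-- The list `k1, k1±1, …, k2` (increasing if `k1 ≤ k2`, decreasing if `k1 > k2`). -/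
def rangeK (k1 k2 : ℕ) : List ℕ :=
  if k1 ≤ k2 then (List.range (k2 + 1 - k1)).map (k1 + ·)
  else (List.range (k1 + 1 - k2)).map (k1 - ·)

/-- Expansion of one block `w_1^{i^{c_1}} ⋯ w_t^{i^{c_t}}`, where
`ps = [(w_1, c_1), …, (w_t, c_t)]`. -/
def iterBlock {α : Type} (ps : List (List α × ℕ)) (i : ℕ) : List α :=
  (ps.map (fun p => repList p.1 (i ^ p.2))).flatten

/-- Expansion of `∏_{i=k1}^{k2} w_1^{i^{c_1}} ⋯ w_t^{i^{c_t}}`. -/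
def iterExpand {α : Type} (k1 k2 : ℕ) (ps : List (List α × ℕ)) : List α :=
  ((rangeK k1 k2).map (iterBlock ps)).flatten

/-- A `d`-ISLP: variables `Fin N`, exactly one valid rule per variable, a start
variable, and acyclicity (variables are topologically ordered: every variable
occurring in the rule of `A` is smaller than `A`). -/
structure ISLP (α : Type) (d : ℕ) : Type where
  N : ℕ
  rule : Fin N → ISLPRule α N
  start : Fin N
  ok : ∀ A, (rule A).Ok d
  acyclic : ∀ A, ∀ B ∈ (rule A).vars, B < A

namespace ISLP

/-- `Expands rule A w` holds iff the (unique) expansion of variable `A` is `w`. -/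
inductive Expands {α : Type} {N : ℕ} (rule : Fin N → ISLPRule α N) : Fin N → List α → Prop
  | term {A : Fin N} {a : α} : rule A = .term a → Expands rule A [a]
  | pair {A B C : Fin N} {u v : List α} : rule A = .pair B C →
      Expands rule B u → Expands rule C v → Expands rule A (u ++ v)
  | iter {A : Fin N} {k1 k2 : ℕ} {Bs : List (Fin N × ℕ)} {ps : List (List α × ℕ)} :
      rule A = .iter k1 k2 Bs →
      ps.map Prod.snd = Bs.map Prod.snd →
      (∀ q ∈ Bs.zip ps, Expands rule q.1.1 q.2.1) →
      Expands rule A (iterExpand k1 k2 ps)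

variable {α : Type} {d : ℕ}

/-- The ISLP `G` generates the string `T`. -/
def Generates (G : ISLP α d) (T : List α) : Prop := Expands G.rule G.start T

/-- The size of an ISLP: the sum of the sizes of its rules. -/
def size (G : ISLP α d) : ℕ := ∑ A : Fin G.N, (G.rule A).size

end ISLP

/-- `g_{it(d)}(T)`: the minimum size of a `d`-ISLP generating `T`. -/
noncomputable def gIt (α : Type) (d : ℕ) (T : List α) : ℕ :=
  sInf {g : ℕ | ∃ G : ISLP α d, G.Generates T ∧ G.size = g}

/-- An L-system (for compression): a finite alphabet `Fin m` of variables, a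
non-erasing morphism `phi`, a coding `tau`, a start variable, a depth and a
length. -/
structure LSystem (α : Type) : Type where
  m : ℕ
  phi : Fin m → List (Fin m)
  phiNE : ∀ v, phi v ≠ []
  tau : Fin m → α
  start : Fin m
  depth : ℕ
  len : ℕ

namespace LSystem

variable {α : Type}

/-- The word `φ^d(S)`. -/
def word (L : LSystem α) : List (Fin L.m) :=
  (fun w => w.flatMap L.phi)^[L.depth] [L.start]

/-- The L-system `L` generates `T` if `|φ^d(S)| ≥ n` and
`T = τ(φ^d(S))[1..n]`, the length-`n` prefix of the coded word. -/
def Generates (L : LSystem α) (T : List α) : Prop :=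
  L.len ≤ L.word.length ∧ T = (L.word.map L.tau).take L.len

/-- The size of an L-system: `Σ_{A ∈ V} |φ(A)|`. -/
def size (L : LSystem α) : ℕ := ∑ v : Fin L.m, (L.phi v).length

end LSystem

/-- `ℓ(T)`: the minimum size of an L-system generating `T`. -/
noncomputable def ell {α : Type} (T : List α) : ℕ :=
  sInf {s : ℕ | ∃ L : LSystem α, L.Generates T ∧ L.size = s}

/-!
For a fixed morphism `φ` and start letter, the length-`n` prefix of `φ^t(S)` is eventually
periodic in `t`, with period independent of `n` and preperiod `O(n)`. Bounded words are eventually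
periodic outright; from a growing letter one reaches, behind a bounded prefix, a letter `h` with
`φ^q(h) = B h R` and `B` bounded, so the prefix of `φ^(t+q)(h)` is the eventually periodic block
`φ^t(B)` followed by a shorter prefix of `φ^t(h)`. Hence every depth can be traded for one that is
`O(n)`, and since there are finitely many L-systems of size `≤ s`, they generate only `O(n)`
strings of length `n`. The `(n+1)²` strings `0^(j+1) 1^(k+1) 2^(2n+1-j-k)` of length `2n+3` all
have ISLPs of size 19, so the largest `ℓ` among them tends to infinity while `g_it` stays bounded.
-/

namespace D0L

variable {α : Type*} {φ : α → List α}

lemma iterate_flatMap_append (φ : α → List α) (t : ℕ) (u v : List α) :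
    (List.flatMap φ)^[t] (u ++ v) = (List.flatMap φ)^[t] u ++ (List.flatMap φ)^[t] v :=
  Function.Semiconj₂.iterate (f := List.flatMap φ) (op := (· ++ ·))
    (fun _ _ => List.flatMap_append) t u v

lemma iterate_flatMap_nil (φ : α → List α) (t : ℕ) : (List.flatMap φ)^[t] [] = [] :=
  Function.iterate_fixed List.flatMap_nil t

lemma take_append_congr {X W₁ W₂ : List α} {n : ℕ}
    (h : W₁.take (n - X.length) = W₂.take (n - X.length)) :
    (X ++ W₁).take n = (X ++ W₂).take n := by
  rw [List.take_append, List.take_append, h]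

def IsBounded (φ : α → List α) (w : List α) : Prop :=
  ∃ B, ∀ t, ((List.flatMap φ)^[t] w).length ≤ B

lemma isBounded_nil : IsBounded φ [] :=
  ⟨0, fun t => by rw [iterate_flatMap_nil]; rfl⟩

lemma IsBounded.append {u v : List α} (hu : IsBounded φ u) (hv : IsBounded φ v) :
    IsBounded φ (u ++ v) := by
  obtain ⟨B, hB⟩ := hu
  obtain ⟨C, hC⟩ := hv
  exact ⟨B + C, fun t => by
    rw [iterate_flatMap_append, List.length_append]; exact add_le_add (hB t) (hC t)⟩

lemma IsBounded.iterate {w : List α} (hw : IsBounded φ w) (k : ℕ) :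
    IsBounded φ ((List.flatMap φ)^[k] w) := by
  obtain ⟨B, hB⟩ := hw
  exact ⟨B, fun t => by rw [← Function.iterate_add_apply]; exact hB _⟩

lemma IsBounded.of_flatMap {w : List α} (hw : IsBounded φ (w.flatMap φ)) : IsBounded φ w := by
  obtain ⟨B, hB⟩ := hw
  refine ⟨w.length + B, fun t => ?_⟩
  cases t with
  | zero => exact Nat.le_add_right _ _
  | succ t => rw [Function.iterate_succ_apply]; exact le_add_left (hB t)

lemma isBounded_of_isPeriodicPt {w : List α} {q : ℕ} (hq : 0 < q)
    (hw : Function.IsPeriodicPt (List.flatMap φ) q w) : IsBounded φ w := by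
  refine ⟨∑ r ∈ Finset.range q, ((List.flatMap φ)^[r] w).length, fun t => ?_⟩
  rw [← hw.iterate_mod_apply t]
  exact Finset.single_le_sum (f := fun r => ((List.flatMap φ)^[r] w).length)
    (fun _ _ => Nat.zero_le _) (Finset.mem_range.mpr (Nat.mod_lt t hq))

lemma IsBounded.exists_eventually_periodic [Finite α] {w : List α} (hw : IsBounded φ w) :
    ∃ ρ Λ, 0 < Λ ∧ ∀ t k, ρ ≤ t →
      (List.flatMap φ)^[t + k * Λ] w = (List.flatMap φ)^[t] w := by
  obtain ⟨B, hB⟩ := hw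
  have : Finite {l : List α | l.length ≤ B} := (List.finite_length_le α B).to_subtype
  obtain ⟨i, j, hij, heq⟩ := Finite.exists_ne_map_eq_of_infinite
    fun t : ℕ => (⟨(List.flatMap φ)^[t] w, hB t⟩ : {l : List α | l.length ≤ B})
  wlog hlt : i < j generalizing i j
  · exact this j i hij.symm heq.symm (by omega)
  have hper : Function.IsPeriodicPt (List.flatMap φ) (j - i) ((List.flatMap φ)^[i] w) := by
    rw [Function.IsPeriodicPt, Function.IsFixedPt, ← Function.iterate_add_apply,
      Nat.sub_add_cancel hlt.le]
    exact congrArg Subtype.val heq.symm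
  refine ⟨i, j - i, by omega, fun t k ht => ?_⟩
  obtain ⟨u, rfl⟩ := Nat.exists_eq_add_of_le ht
  rw [show i + u + k * (j - i) = u + ((j - i) * k + i) by ring, Function.iterate_add_apply,
    Function.iterate_add_apply _ _ i, (hper.mul_const k).eq, ← Function.iterate_add_apply,
    add_comm u]

lemma exists_bounded_prefix {w : List α} (hw : ¬IsBounded φ w) :
    ∃ B g R, w = B ++ g :: R ∧ IsBounded φ B ∧ ¬IsBounded φ [g] := by
  induction w with
  | nil => exact absurd isBounded_nil hw
  | cons c w ih =>
    by_cases hc : IsBounded φ [c]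
    · obtain ⟨B, g, R, rfl, hB, hg⟩ := ih fun h => hw (hc.append h)
      exact ⟨c :: B, g, R, rfl, hc.append hB, hg⟩
    · exact ⟨[], c, w, rfl, isBounded_nil, hc⟩

def HasBoundedPrefix (φ : α → List α) (k : ℕ) (x y : α) : Prop :=
  ∃ B R, (List.flatMap φ)^[k] [x] = B ++ y :: R ∧ IsBounded φ B

lemma HasBoundedPrefix.trans {a b : ℕ} {x y z : α} (hxy : HasBoundedPrefix φ a x y)
    (hyz : HasBoundedPrefix φ b y z) : HasBoundedPrefix φ (b + a) x z := by
  obtain ⟨B, R, hxy, hB⟩ := hxy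
  obtain ⟨B', R', hyz, hB'⟩ := hyz
  refine ⟨(List.flatMap φ)^[b] B ++ B', R' ++ (List.flatMap φ)^[b] R, ?_,
    (hB.iterate b).append hB'⟩
  rw [Function.iterate_add_apply, hxy, ← List.singleton_append, iterate_flatMap_append,
    iterate_flatMap_append, hyz]
  simp

/-- Following leftmost growing letters from `c` must eventually revisit one of them. -/
lemma exists_cycle [Finite α] {c : α} (hc : ¬IsBounded φ [c]) :
    ∃ i q h, 0 < q ∧ ¬IsBounded φ [h] ∧ HasBoundedPrefix φ i c h ∧ HasBoundedPrefix φ q h h := by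
  have hnext : ∀ x : {x // ¬IsBounded φ [x]}, ∃ y : {x // ¬IsBounded φ [x]},
      HasBoundedPrefix φ 1 x y := fun ⟨x, hx⟩ => by
    obtain ⟨B, g, R, hBgR, hB, hg⟩ := exists_bounded_prefix fun h => hx (IsBounded.of_flatMap h)
    exact ⟨⟨g, hg⟩, B, R, hBgR, hB⟩
  choose next hnext using hnext
  have hpath : ∀ k (x : {x // ¬IsBounded φ [x]}), HasBoundedPrefix φ k x (next^[k] x) := by
    intro k
    induction k with
    | zero => exact fun x => ⟨[], [], rfl, isBounded_nil⟩
    | succ k ih =>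
      intro x
      rw [Function.iterate_succ_apply]
      exact (hnext x).trans (ih (next x))
  obtain ⟨i, j, hij, heq⟩ := Finite.exists_ne_map_eq_of_infinite fun k => next^[k] ⟨c, hc⟩
  wlog hlt : i < j generalizing i j
  · exact this j i hij.symm heq.symm (by omega)
  refine ⟨i, j - i, next^[i] ⟨c, hc⟩, by omega, (next^[i] ⟨c, hc⟩).2, hpath i ⟨c, hc⟩, ?_⟩
  have := hpath (j - i) (next^[i] ⟨c, hc⟩)
  rwa [← Function.iterate_add_apply, Nat.sub_add_cancel hlt.le, ← heq] at this

lemma iterate_add_of_cycle {q : ℕ} {h : α} {B R : List α}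
    (hcyc : (List.flatMap φ)^[q] [h] = B ++ h :: R) (t : ℕ) :
    (List.flatMap φ)^[t + q] [h] = (List.flatMap φ)^[t] B ++
      ((List.flatMap φ)^[t] [h] ++ (List.flatMap φ)^[t] R) := by
  rw [Function.iterate_add_apply, hcyc, ← List.singleton_append, iterate_flatMap_append,
    iterate_flatMap_append]

def GrowsLinearly (φ : α → List α) (w : List α) : Prop :=
  ∃ a, ∀ n s, a * (n + 1) ≤ s → n ≤ ((List.flatMap φ)^[s] w).length

lemma GrowsLinearly.append_left {u v : List α} (hv : GrowsLinearly φ v) :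
    GrowsLinearly φ (u ++ v) := by
  obtain ⟨a, ha⟩ := hv
  exact ⟨a, fun n s hs => by
    rw [iterate_flatMap_append, List.length_append]; exact le_add_left (ha n s hs)⟩

def HasPrefixPeriod (φ : α → List α) (w : List α) (a b : ℕ) : Prop :=
  ∀ n s, a * (n + 1) ≤ s →
    ((List.flatMap φ)^[s + b] w).take n = ((List.flatMap φ)^[s] w).take n

lemma HasPrefixPeriod.mul {w : List α} {a b : ℕ} (h : HasPrefixPeriod φ w a b) (k : ℕ) :
    HasPrefixPeriod φ w a (b * k) := by
  intro n s hs
  induction k with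
  | zero => rfl
  | succ k ih => rw [Nat.mul_succ, ← add_assoc, h n _ (hs.trans (Nat.le_add_right _ _)), ih]

lemma HasPrefixPeriod.of_iterate {w : List α} {a b i : ℕ}
    (h : HasPrefixPeriod φ ((List.flatMap φ)^[i] w) a b) : HasPrefixPeriod φ w (a + i) b := by
  intro n s hs
  have hi : i ≤ s := le_trans (by nlinarith) hs
  obtain ⟨u, rfl⟩ : ∃ u, s = u + i := ⟨s - i, by omega⟩
  rw [add_right_comm, Function.iterate_add_apply, Function.iterate_add_apply _ u i,
    h n u (by nlinarith)]

lemma HasPrefixPeriod.append_of_isBounded [Finite α] {u v : List α} {a b : ℕ}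
    (hu : IsBounded φ u) (hv : HasPrefixPeriod φ v a b) (hb : 0 < b) :
    ∃ a' b', 0 < b' ∧ HasPrefixPeriod φ (u ++ v) a' b' := by
  obtain ⟨ρ, Λ, hΛ, hper⟩ := hu.exists_eventually_periodic
  refine ⟨a + ρ, b * Λ, Nat.mul_pos hb hΛ, fun n s hs => ?_⟩
  have hρ : ρ ≤ s := le_trans (by nlinarith) hs
  rw [iterate_flatMap_append, iterate_flatMap_append, hper s b hρ]
  refine take_append_congr (hv.mul Λ _ s ?_)
  have : a * (n - ((List.flatMap φ)^[s] u).length + 1) ≤ a * (n + 1) :=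
    Nat.mul_le_mul_left a (by omega)
  nlinarith

lemma HasPrefixPeriod.append_of_growsLinearly {u : List α} {a b : ℕ}
    (hu : HasPrefixPeriod φ u a b) (hg : GrowsLinearly φ u) (v : List α) :
    ∃ a', HasPrefixPeriod φ (u ++ v) a' b := by
  obtain ⟨g, hg⟩ := hg
  refine ⟨a + g, fun n s hs => ?_⟩
  rw [iterate_flatMap_append, iterate_flatMap_append,
    List.take_append_of_le_length (hg n _ (by nlinarith)),
    List.take_append_of_le_length (hg n _ (by nlinarith)), hu n s (by nlinarith)]

lemma HasPrefixPeriod.exists_depth_le {w : List α} {a b : ℕ} (h : HasPrefixPeriod φ w a b)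
    (hb : 0 < b) (n t : ℕ) :
    ∃ t' ≤ (a + b) * (n + 1),
      ((List.flatMap φ)^[t] w).take n = ((List.flatMap φ)^[t'] w).take n := by
  induction t using Nat.strong_induction_on with
  | _ t ih =>
    rcases le_or_gt t ((a + b) * (n + 1)) with ht | ht
    · exact ⟨t, ht, rfl⟩
    have hab : a * (n + 1) + b ≤ (a + b) * (n + 1) := by nlinarith
    obtain ⟨t', ht', heq⟩ := ih (t - b) (by omega)
    refine ⟨t', ht', ?_⟩
    rw [← heq, ← h n (t - b) (by omega), Nat.sub_add_cancel (by omega)]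

section NonErasing

variable (hφ : ∀ a, φ a ≠ [])
include hφ

lemma length_le_length_flatMap (w : List α) : w.length ≤ (w.flatMap φ).length := by
  induction w with
  | nil => rfl
  | cons a w ih =>
    rw [List.flatMap_cons, List.length_append, List.length_cons]
    have := List.length_pos_iff.mpr (hφ a)
    omega

lemma length_le_length_iterate (t : ℕ) (w : List α) :
    w.length ≤ ((List.flatMap φ)^[t] w).length := by
  induction t generalizing w with
  | zero => rfl
  | succ t ih =>
    rw [Function.iterate_succ_apply]
    exact (length_le_length_flatMap hφ w).trans (ih _)

lemma length_iterate_mono {t t' : ℕ} (htt' : t ≤ t') (w : List α) :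
    ((List.flatMap φ)^[t] w).length ≤ ((List.flatMap φ)^[t'] w).length := by
  obtain ⟨u, rfl⟩ := Nat.exists_eq_add_of_le htt'
  rw [add_comm, Function.iterate_add_apply]
  exact length_le_length_iterate hφ u _

lemma growsLinearly_of_cycle {q : ℕ} {h : α} {B R : List α}
    (hcyc : (List.flatMap φ)^[q] [h] = B ++ h :: R) (hBR : B ++ R ≠ []) :
    GrowsLinearly φ [h] := by
  have hBR : 1 ≤ B.length + R.length := by
    rw [← List.length_append]; exact List.length_pos_iff.mpr hBR
  have hstep : ∀ j, j + 1 ≤ ((List.flatMap φ)^[j * q] [h]).length := by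
    intro j
    induction j with
    | zero => simp
    | succ j ih =>
      rw [add_mul, one_mul, iterate_add_of_cycle hcyc]
      have := length_le_length_iterate hφ (j * q) B
      have := length_le_length_iterate hφ (j * q) R
      simp only [List.length_append]
      omega
  refine ⟨q, fun n s hs => ?_⟩
  have := length_iterate_mono hφ (show n * q ≤ s by nlinarith) [h]
  have := hstep n
  omega

lemma exists_hasPrefixPeriod_of_cycle [Finite α] {q : ℕ} {h : α} {B R : List α} (hq : 0 < q)
    (hcyc : (List.flatMap φ)^[q] [h] = B ++ h :: R) (hB : IsBounded φ B)
    (hgrow : GrowsLinearly φ [h]) : ∃ a b, 0 < b ∧ HasPrefixPeriod φ [h] a b := by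
  obtain ⟨g, hg⟩ := hgrow
  rcases eq_or_ne B [] with rfl | hBne
  · refine ⟨g, q, hq, fun n s hs => ?_⟩
    rw [iterate_add_of_cycle hcyc, iterate_flatMap_nil, List.nil_append,
      List.take_append_of_le_length (hg n s hs)]
  obtain ⟨ρ, Λ, hΛ, hper⟩ := hB.exists_eventually_periodic
  refine ⟨g + ρ + q, q * Λ, Nat.mul_pos hq hΛ, fun n => ?_⟩
  induction n using Nat.strong_induction_on with
  | _ n ih =>
    intro s hs
    rcases n.eq_zero_or_pos with rfl | hn
    · rfl
    -- `φ^s(h) = φ^t(B) φ^t(h) φ^t(R)` with `t = s - q`; the nonempty block `φ^t(B)` is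
    -- periodic, so the prefix question drops to a shorter prefix of `φ^t(h)`.
    have hqs : q ≤ s := le_trans (by nlinarith) hs
    obtain ⟨t, rfl⟩ : ∃ t, s = t + q := ⟨s - q, by omega⟩
    have ht : (g + ρ + q) * n + g + ρ ≤ t := by nlinarith
    set n' := n - ((List.flatMap φ)^[t] B).length
    have hn' : n' + 1 ≤ n := by
      have := length_le_length_iterate hφ t B
      have := List.length_pos_iff.mpr hBne
      omega
    have hA : (g + ρ + q) * (n' + 1) ≤ (g + ρ + q) * n := Nat.mul_le_mul_left _ hn'
    have hG : g * (n' + 1) ≤ g * n := Nat.mul_le_mul_left _ hn'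
    have hgA : g * n ≤ (g + ρ + q) * n := Nat.mul_le_mul_right _ (by omega)
    rw [add_right_comm, iterate_add_of_cycle hcyc, iterate_add_of_cycle hcyc,
      hper t q (by omega)]
    refine take_append_congr ?_
    rw [List.take_append_of_le_length (hg n' _ (by omega)),
      List.take_append_of_le_length (hg n' _ (by omega)), ih n' (by omega) t (by omega)]

theorem exists_hasPrefixPeriod [Finite α] (c : α) :
    ∃ a b, 0 < b ∧ HasPrefixPeriod φ [c] a b := by
  by_cases hc : IsBounded φ [c]
  · obtain ⟨ρ, Λ, hΛ, hper⟩ := hc.exists_eventually_periodic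
    refine ⟨ρ, Λ, hΛ, fun n s hs => ?_⟩
    rw [← one_mul Λ, hper s 1 (le_trans (Nat.le_mul_of_pos_right _ n.succ_pos) hs)]
  obtain ⟨i, q, h, hq, hh, ⟨B₀, R₀, hi, hB₀⟩, ⟨B, R, hcyc, hB⟩⟩ := exists_cycle hc
  have hBR : B ++ R ≠ [] := by
    intro hBR
    obtain ⟨rfl, rfl⟩ := List.append_eq_nil_iff.mp hBR
    exact hh (isBounded_of_isPeriodicPt hq hcyc)
  have hgrow := growsLinearly_of_cycle hφ hcyc hBR
  obtain ⟨a, b, hb, hab⟩ := exists_hasPrefixPeriod_of_cycle hφ hq hcyc hB hgrow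
  obtain ⟨a', b', hb', hab'⟩ := hab.append_of_isBounded hB₀ hb
  obtain ⟨a'', hab''⟩ := hab'.append_of_growsLinearly hgrow.append_left R₀
  refine ⟨a'' + i, b', hb', HasPrefixPeriod.of_iterate ?_⟩
  rw [hi]
  simpa using hab''

end NonErasing

end D0L

namespace LSystem

variable {α : Type}

lemma length_phi_le_size (L : LSystem α) (v : Fin L.m) : (L.phi v).length ≤ L.size :=
  Finset.single_le_sum (f := fun u => (L.phi u).length) (fun _ _ => Nat.zero_le _)
    (Finset.mem_univ v)

lemma m_le_size (L : LSystem α) : L.m ≤ L.size := by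
  have := Finset.card_nsmul_le_sum Finset.univ (fun v => (L.phi v).length) 1
    fun v _ => List.length_pos_iff.mpr (L.phiNE v)
  simpa [size] using this

def ofList (T : List α) (hT : T ≠ []) : LSystem α where
  m := T.length
  phi _ := List.finRange T.length
  phiNE _ := by simpa [List.finRange_eq_nil_iff] using hT
  tau := T.get
  start := ⟨0, List.length_pos_iff.mpr hT⟩
  depth := 1
  len := T.length

lemma generates_ofList (T : List α) (hT : T ≠ []) : (ofList T hT).Generates T := by
  have hword : (ofList T hT).word = List.finRange T.length := by
    simp [word, ofList]
  refine ⟨?_, ?_⟩ <;> rw [hword]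
  · simp [ofList]
  · show T = (List.map T.get (List.finRange T.length)).take T.length
    rw [List.map_get_finRange, List.take_length]

lemma exists_size_eq_ell {T : List α} (hT : T ≠ []) :
    ∃ L : LSystem α, L.Generates T ∧ L.size = ell T :=
  Nat.sInf_mem (s := {s | ∃ L : LSystem α, L.Generates T ∧ L.size = s})
    ⟨_, ofList T hT, generates_ofList T hT, rfl⟩

end LSystem

/-- The data `(V, φ, τ, S)` of an L-system of size at most `s`. -/
def LSkeleton (α : Type) (s : ℕ) : Type :=
  Σ m : Fin (s + 1), (Fin m → {l : List (Fin m) // l ≠ [] ∧ l.length ≤ s}) × (Fin m → α) × Fin m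

namespace LSkeleton

variable {α : Type} {s : ℕ}

instance (m s : ℕ) : Finite {l : List (Fin m) // l ≠ [] ∧ l.length ≤ s} :=
  Set.Finite.to_subtype (Set.Finite.subset (List.finite_length_le (Fin m) s)
    fun (l : List (Fin m)) (h : l ≠ [] ∧ l.length ≤ s) => h.2)

instance [Finite α] : Finite (LSkeleton α s) := by
  unfold LSkeleton
  infer_instance

def phi (K : LSkeleton α s) (v : Fin K.1) : List (Fin K.1) := (K.2.1 v).1

/-- The length-`n` prefix of `τ(φ^t(S))`. -/
def gen (K : LSkeleton α s) (n t : ℕ) : List α :=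
  (((List.flatMap K.phi)^[t] [K.2.2.2]).map K.2.2.1).take n

lemma exists_gen_depth_le (K : LSkeleton α s) :
    ∃ C, ∀ n t, ∃ t' ≤ C * (n + 1), K.gen n t = K.gen n t' := by
  obtain ⟨a, b, hb, hab⟩ := D0L.exists_hasPrefixPeriod (fun v => (K.2.1 v).2.1) K.2.2.2
  refine ⟨a + b, fun n t => ?_⟩
  obtain ⟨t', ht', heq⟩ := hab.exists_depth_le hb n t
  exact ⟨t', ht', by simp only [gen, ← List.map_take]; exact congrArg _ heq⟩

end LSkeleton

def LSystem.toLSkeleton {α : Type} {s : ℕ} (L : LSystem α) (hL : L.size ≤ s) : LSkeleton α s :=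
  ⟨⟨L.m, Nat.lt_succ_of_le (L.m_le_size.trans hL)⟩,
    fun v => ⟨L.phi v, L.phiNE v, (L.length_phi_le_size v).trans hL⟩, L.tau, L.start⟩

lemma LSystem.Generates.eq_gen {α : Type} {s : ℕ} {L : LSystem α} {T : List α}
    (hT : L.Generates T) (hL : L.size ≤ s) : T = (L.toLSkeleton hL).gen T.length L.depth := by
  obtain ⟨hlen, rfl⟩ := hT
  simp only [List.length_take, List.length_map, min_eq_left hlen]
  rfl

lemma exists_finset_cover_of_depth_le {ι β : Type*} [Finite ι] (g : ι → ℕ → ℕ → β)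
    (hg : ∀ i, ∃ C, ∀ n t, ∃ t' ≤ C * (n + 1), g i n t = g i n t') :
    ∃ D, ∀ n, ∃ G : Finset β, G.card ≤ D * (n + 1) ∧ ∀ i t, g i n t ∈ G := by
  classical
  have := Fintype.ofFinite ι
  choose C hC using hg
  set Cmax := Finset.univ.sup C
  refine ⟨Fintype.card ι * (Cmax + 1), fun n =>
    ⟨(Finset.univ ×ˢ Finset.range (Cmax * (n + 1) + 1)).image fun p => g p.1 n p.2, ?_,
      fun i t => ?_⟩⟩
  · calc _ ≤ (Finset.univ ×ˢ Finset.range (Cmax * (n + 1) + 1)).card := Finset.card_image_le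
      _ = Fintype.card ι * (Cmax * (n + 1) + 1) := by simp
      _ ≤ Fintype.card ι * (Cmax + 1) * (n + 1) := by rw [mul_assoc]; gcongr; nlinarith
  · obtain ⟨t', ht', heq⟩ := hC i n t
    have hC : C i * (n + 1) ≤ Cmax * (n + 1) :=
      Nat.mul_le_mul_right _ (Finset.le_sup (Finset.mem_univ i))
    rw [heq]
    exact Finset.mem_image.mpr ⟨(i, t'), Finset.mem_product.mpr
      ⟨Finset.mem_univ i, Finset.mem_range.mpr (by omega)⟩, rfl⟩

theorem exists_finset_cover_generated {α : Type} [Finite α] (s : ℕ) :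
    ∃ D, ∀ n, ∃ G : Finset (List α), G.card ≤ D * (n + 1) ∧
      ∀ (L : LSystem α) (T : List α), L.Generates T → L.size ≤ s → T.length = n → T ∈ G := by
  obtain ⟨D, hD⟩ := exists_finset_cover_of_depth_le (LSkeleton.gen (α := α) (s := s))
    LSkeleton.exists_gen_depth_le
  refine ⟨D, fun n => ?_⟩
  obtain ⟨G, hG, hmem⟩ := hD n
  refine ⟨G, hG, fun L T hT hL hn => ?_⟩
  rw [hT.eq_gen hL, hn]
  exact hmem _ _

open Filter in
lemma exists_tendsto_ell_atTop {α : Type} [Finite α] (F : ℕ → Finset (List α)) (len : ℕ → ℕ)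
    (hF : ∀ n, (F n).Nonempty) (hnil : ∀ n, ∀ T ∈ F n, T ≠ [])
    (hlen : ∀ n, ∀ T ∈ F n, T.length = len n)
    (hcard : ∀ D, ∀ᶠ n in atTop, D * (len n + 1) < (F n).card) :
    ∃ T : ℕ → List α, (∀ n, T n ∈ F n) ∧ Tendsto (fun n => ell (T n)) atTop atTop := by
  choose T hTF hTmax using fun n => (F n).exists_max_image ell (hF n)
  refine ⟨T, hTF, tendsto_atTop.2 fun s => ?_⟩
  obtain ⟨D, hD⟩ := exists_finset_cover_generated (α := α) s
  filter_upwards [hcard D] with n hn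
  by_contra! hlt
  obtain ⟨G, hG, hmem⟩ := hD (len n)
  have hsub : F n ⊆ G := fun T' hT' => by
    obtain ⟨L, hL, hsize⟩ := LSystem.exists_size_eq_ell (hnil n T' hT')
    exact hmem L T' hL (by have := hTmax n T' hT'; omega) (hlen n T' hT')
  exact (hn.trans_le ((Finset.card_le_card hsub).trans hG)).false

lemma ISLP.Expands.iter_replicate {α : Type} {N : ℕ} {rule : Fin N → ISLPRule α N}
    {A B : Fin N} {a : α} {J : ℕ} (hJ : 1 ≤ J) (hA : rule A = .iter 1 J [(B, 0)])
    (hB : ISLP.Expands rule B [a]) : ISLP.Expands rule A (List.replicate J a) := by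
  have := ISLP.Expands.iter (ps := [([a], 0)]) hA rfl (by simpa using hB)
  simpa [iterExpand, iterBlock, repList, rangeK, hJ, Function.comp_def] using this

def blockRule (a b c : ℕ) : Fin 8 → ISLPRule (Fin 3) 8 :=
  ![.term 0, .term 1, .term 2, .iter 1 a [(0, 0)], .iter 1 b [(1, 0)], .iter 1 c [(2, 0)],
    .pair 3 4, .pair 6 5]

/-- `0^a 1^b 2^c` as `((0^a 1^b) 2^c)`, each power a single iteration rule. -/
def blockISLP (d a b c : ℕ) (ha : 1 ≤ a) (hb : 1 ≤ b) (hc : 1 ≤ c) : ISLP (Fin 3) d where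
  N := 8
  rule := blockRule a b c
  start := 7
  ok A := by fin_cases A <;> simp [blockRule, ISLPRule.Ok, ha, hb, hc]
  acyclic A := by fin_cases A <;> simp [blockRule, ISLPRule.vars]

lemma gIt_replicate_le (d : ℕ) {a b c : ℕ} (ha : 1 ≤ a) (hb : 1 ≤ b) (hc : 1 ≤ c) :
    gIt (Fin 3) d (List.replicate a 0 ++ List.replicate b 1 ++ List.replicate c 2) ≤ 19 := by
  refine Nat.sInf_le ⟨blockISLP d a b c ha hb hc, ?_, rfl⟩
  have e0 : ISLP.Expands (blockRule a b c) 0 [0] := .term rfl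
  have e1 : ISLP.Expands (blockRule a b c) 1 [1] := .term rfl
  have e2 : ISLP.Expands (blockRule a b c) 2 [2] := .term rfl
  show ISLP.Expands (blockRule a b c) 7 _
  exact .pair rfl (.pair rfl (.iter_replicate ha rfl e0) (.iter_replicate hb rfl e1))
    (.iter_replicate hc rfl e2)

def blockWord (n j k : ℕ) : List (Fin 3) :=
  List.replicate (j + 1) 0 ++ List.replicate (k + 1) 1 ++ List.replicate (2 * n + 1 - j - k) 2

def blockWords (n : ℕ) : Finset (List (Fin 3)) :=
  (Finset.range (n + 1) ×ˢ Finset.range (n + 1)).image fun p => blockWord n p.1 p.2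

lemma mem_blockWords {n : ℕ} {T : List (Fin 3)} :
    T ∈ blockWords n ↔ ∃ j ≤ n, ∃ k ≤ n, blockWord n j k = T := by
  simp [blockWords, and_assoc]

lemma card_blockWords (n : ℕ) : (blockWords n).card = (n + 1) * (n + 1) := by
  rw [blockWords, Finset.card_image_of_injOn, Finset.card_product, Finset.card_range]
  intro p _ p' _ h
  exact Prod.ext (by simpa [blockWord, List.count_replicate] using congrArg (List.count 0) h)
    (by simpa [blockWord, List.count_replicate] using congrArg (List.count 1) h)

lemma length_of_mem_blockWords {n : ℕ} {T : List (Fin 3)} (hT : T ∈ blockWords n) :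
    T.length = 2 * n + 3 := by
  obtain ⟨j, hj, k, hk, rfl⟩ := mem_blockWords.mp hT
  simp only [blockWord, List.length_append, List.length_replicate]
  omega

lemma ne_nil_of_mem_blockWords {n : ℕ} {T : List (Fin 3)} (hT : T ∈ blockWords n) : T ≠ [] := by
  obtain ⟨j, -, k, -, rfl⟩ := mem_blockWords.mp hT
  simp [blockWord]

lemma gIt_le_of_mem_blockWords (d : ℕ) {n : ℕ} {T : List (Fin 3)} (hT : T ∈ blockWords n) :
    gIt (Fin 3) d T ≤ 19 := by
  obtain ⟨j, hj, k, hk, rfl⟩ := mem_blockWords.mp hT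
  exact gIt_replicate_le d (by omega) (by omega) (by omega)

open Filter in
lemma eventually_lt_card_blockWords (D : ℕ) :
    ∀ᶠ n in atTop, D * (2 * n + 3 + 1) < (blockWords n).card := by
  filter_upwards [eventually_ge_atTop (2 * D)] with n hn
  rw [card_blockWords]
  nlinarith

open Filter in
/-- For every `d ≥ 0` there exists a sequence of nonempty
strings (over some finite alphabet) of lengths tending to infinity on which
`g_{it(d)} = o(ℓ)`. -/
theorem gIt_little_o_ell (d : ℕ) :
    ∃ (m : ℕ) (T : ℕ → List (Fin m)),
      (∀ i, T i ≠ []) ∧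
      Tendsto (fun i => (T i).length) atTop atTop ∧
      Tendsto (fun i => (gIt (Fin m) d (T i) : ℝ) / (ell (T i) : ℝ)) atTop (nhds 0) := by
  obtain ⟨T, hT, hell⟩ := exists_tendsto_ell_atTop blockWords (fun n => 2 * n + 3)
    (fun n => ⟨_, mem_blockWords.mpr ⟨0, n.zero_le, 0, n.zero_le, rfl⟩⟩)
    (fun _ _ => ne_nil_of_mem_blockWords) (fun _ _ => length_of_mem_blockWords)
    eventually_lt_card_blockWords
  refine ⟨3, T, fun n => ne_nil_of_mem_blockWords (hT n), ?_, ?_⟩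
  · simp only [length_of_mem_blockWords (hT _)]
    exact tendsto_atTop_mono (fun n => show n ≤ 2 * n + 3 by omega) tendsto_id
  · refine squeeze_zero (fun n => by positivity) (fun n => div_le_div_of_nonneg_right
      (show (gIt (Fin 3) d (T n) : ℝ) ≤ 19 by exact_mod_cast gIt_le_of_mem_blockWords d (hT n))
      (Nat.cast_nonneg _)) ?_
    exact tendsto_const_nhds.div_atTop (tendsto_natCast_atTop_atTop.comp hell)
end

section
/- For every integer d ≥ 1, the strings s_k = ∏_{i=1}^{k} aⁱb satisfy g_it(d)(s_k) ≤ 8 for all k ≥ 1 (the d-ISLP with rules S → ∏_{i=1}^{k} A^{i^1} B^{i^0}, A → a, B → b generates s_k). -/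
/-- The string `s_k = ∏_{i=1}^{k} aⁱ b` over the alphabet `{a, b} = Bool`
(with `a = false` and `b = true`). -/
def sWord (k : ℕ) : List Bool :=
  (List.range k).flatMap (fun i => List.replicate (i + 1) false ++ [true])

/-! `s_k` is the expansion of `∏_{i=1}^{k} a^{i^1} b^{i^0}`, so the three rules `A → a`, `B → b` and
`S → ∏_{i=1}^{k} A^{i^1} B^{i^0}`, of sizes `1 + 1 + 6`, form a `d`-ISLP for `s_k` as soon as
`d ≥ 1`. -/

lemma repList_singleton {α : Type} (a : α) (n : ℕ) : repList [a] n = List.replicate n a := by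
  simp [repList, List.flatten_replicate_singleton]

lemma rangeK_one {k : ℕ} (hk : 1 ≤ k) : rangeK 1 k = (List.range k).map (· + 1) := by
  simp only [rangeK, if_pos hk, Nat.add_sub_cancel, Nat.add_comm 1]

lemma iterExpand_eq_sWord {k : ℕ} (hk : 1 ≤ k) :
    iterExpand 1 k [([false], 1), ([true], 0)] = sWord k := by
  simp [iterExpand, sWord, rangeK_one hk, List.flatMap_def, Function.comp_def, iterBlock,
    repList_singleton]

namespace ISLP

variable {α : Type} {d : ℕ}

lemma gIt_le_size {G : ISLP α d} {T : List α} (h : G.Generates T) : gIt α d T ≤ G.size :=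
  Nat.sInf_le ⟨G, h, rfl⟩

def twoLetterIter (a b : α) {k₁ k₂ c₁ c₂ : ℕ} (hk₁ : 1 ≤ k₁) (hk₂ : 1 ≤ k₂)
    (hc₁ : c₁ ≤ d) (hc₂ : c₂ ≤ d) : ISLP α d where
  N := 3
  rule := ![.term a, .term b, .iter k₁ k₂ [(0, c₁), (1, c₂)]]
  start := 2
  ok A := by
    fin_cases A <;> simp [ISLPRule.Ok, hk₁, hk₂, hc₁, hc₂]
  acyclic A := by
    fin_cases A <;> simp [ISLPRule.vars]

variable (a b : α) {k₁ k₂ c₁ c₂ : ℕ} (hk₁ : 1 ≤ k₁) (hk₂ : 1 ≤ k₂) (hc₁ : c₁ ≤ d) (hc₂ : c₂ ≤ d)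

lemma twoLetterIter_generates :
    (twoLetterIter a b hk₁ hk₂ hc₁ hc₂).Generates (iterExpand k₁ k₂ [([a], c₁), ([b], c₂)]) := by
  refine .iter (Bs := [((0 : Fin 3), c₁), (1, c₂)]) rfl rfl ?_
  simp only [List.zip_cons_cons, List.zip_nil_right, List.mem_cons, List.not_mem_nil, or_false]
  rintro q (rfl | rfl) <;> exact .term rfl

lemma twoLetterIter_size : (twoLetterIter a b hk₁ hk₂ hc₁ hc₂).size = 8 :=
  rfl

end ISLP

/-- For every `d ≥ 1` and every `k ≥ 1`,
`g_{it(d)}(s_k) ≤ 8`. -/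
theorem gIt_sWord_le_eight (d : ℕ) (hd : 1 ≤ d) (k : ℕ) (hk : 1 ≤ k) :
    gIt Bool d (sWord k) ≤ 8 := by
  have hG := ISLP.twoLetterIter_generates false true le_rfl hk hd (Nat.zero_le d)
  rw [iterExpand_eq_sWord hk] at hG
  exact (ISLP.gIt_le_size hG).trans_eq (ISLP.twoLetterIter_size ..)
end

section
/- There exists a constant c > 0 such that for every k ≥ 1, the string s_k = ∏_{i=1}^{k} aⁱb satisfies δ(s_k) ≥ c·√(|s_k|), where |s_k| = k(k+3)/2; that is, δ = Ω(√n) on this string family. -/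
/-- The number of distinct substrings of length `k` of `T`. -/
def substrCount {α : Type} [DecidableEq α] (T : List α) (k : ℕ) : ℕ :=
  ((Finset.range (T.length + 1 - k)).image (fun i => (T.drop i).take k)).card

/-- The substring complexity measure `δ(T) = max_{1 ≤ k ≤ |T|} T_k / k`,
where `T_k` is the number of distinct substrings of `T` of length `k`
(defined as `0` for the empty string). -/
noncomputable def delta {α : Type} [DecidableEq α] (T : List α) : ℚ :=
  if h : 1 ≤ T.length then
    (Finset.Icc 1 T.length).sup' (Finset.nonempty_Icc.mpr h)
      (fun k => (substrCount T k : ℚ) / k)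
  else 0

/-! A substring of `s_k` that starts in the block `a^(i+1) b` and ends two blocks later reads
`a^j b a^(i+2) b a^p`, and both `i` and `j` can be read off it. Letting `i` range over `q`
consecutive blocks and `j` over `q` offsets, with `p` fixing the length at `4q + 2`, gives `q²`
distinct substrings of that length, so `δ(s_k) ≥ q² / (4q + 2)`. With `q ≈ k / 3` this is
`Ω(k)`, while `|s_k| ≤ (k + 1)²`. -/

open List

section Substrings

variable {α : Type} [DecidableEq α]

lemma card_le_substrCount {T : List α} {ℓ : ℕ} {S : Finset (List α)}
    (hS : ∀ w ∈ S, w <:+: T ∧ w.length = ℓ) : S.card ≤ substrCount T ℓ := by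
  refine Finset.card_le_card fun w hw => ?_
  obtain ⟨⟨s, t, rfl⟩, rfl⟩ := hS w hw
  refine Finset.mem_image.mpr ⟨s.length, Finset.mem_range.mpr ?_, ?_⟩
  · simp only [length_append]
    omega
  · simp

lemma substrCount_div_le_delta {T : List α} {ℓ : ℕ} (hℓ : 1 ≤ ℓ) (hℓT : ℓ ≤ T.length) :
    (substrCount T ℓ : ℚ) / ℓ ≤ delta T := by
  rw [delta, dif_pos (hℓ.trans hℓT)]
  exact Finset.le_sup' (fun k => (substrCount T k : ℚ) / k) (Finset.mem_Icc.mpr ⟨hℓ, hℓT⟩)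

lemma card_div_le_delta {T : List α} {ℓ : ℕ} {S : Finset (List α)} (hS₀ : S.Nonempty)
    (hS : ∀ w ∈ S, w <:+: T ∧ w.length = ℓ) (hℓ : 1 ≤ ℓ) : (S.card : ℚ) / ℓ ≤ delta T := by
  obtain ⟨w, hw⟩ := hS₀
  have hℓT : ℓ ≤ T.length := (hS w hw).2 ▸ (hS w hw).1.length_le
  calc (S.card : ℚ) / ℓ ≤ substrCount T ℓ / ℓ := by
        gcongr
        exact_mod_cast card_le_substrCount hS
    _ ≤ delta T := substrCount_div_le_delta hℓ hℓT

lemma one_le_delta {T : List α} (hT : T ≠ []) : 1 ≤ delta T := by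
  obtain ⟨x, hx⟩ := exists_mem_of_ne_nil T hT
  simpa using card_div_le_delta (S := {[x]}) (ℓ := 1) (Finset.singleton_nonempty _)
    (by simpa [singleton_infix_iff] using hx) le_rfl

end Substrings

def sBlock (i : ℕ) : List Bool := replicate (i + 1) false ++ [true]

lemma sWord_eq_flatMap (k : ℕ) : sWord k = (range k).flatMap sBlock := rfl

lemma two_mul_length_sWord (k : ℕ) : 2 * (sWord k).length = k * (k + 3) := by
  induction k with
  | zero => rfl
  | succ k ih =>
    rw [sWord_eq_flatMap, range_succ, flatMap_append, length_append, ← sWord_eq_flatMap]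
    simp only [flatMap_singleton, sBlock, length_append, length_replicate, length_singleton]
    linarith

lemma sBlock_append_infix_sWord {i k : ℕ} (h : i + 3 ≤ k) :
    sBlock i ++ sBlock (i + 1) ++ sBlock (i + 2) <:+: sWord k := by
  have hrange : range' i 3 <:+: range k := by
    rw [range_eq_range', show k = i + 3 + (k - (i + 3)) by omega, ← range'_append_1,
      ← range'_append_1 (m := i), zero_add]
    exact infix_append _ _ _
  simpa [range'_succ, sWord_eq_flatMap, append_assoc] using hrange.flatMap sBlock

def gapWord (j g p : ℕ) : List Bool :=
  replicate j false ++ true :: (replicate g false ++ true :: replicate p false)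

lemma replicate_false_append_true_cons_inj {j j' : ℕ} {L L' : List Bool}
    (h : replicate j false ++ true :: L = replicate j' false ++ true :: L') : j = j' ∧ L = L' := by
  induction j generalizing j' with
  | zero => cases j' <;> simp_all [replicate_succ]
  | succ n ih =>
    cases j' with
    | zero => simp [replicate_succ] at h
    | succ m =>
      obtain ⟨rfl, rfl⟩ := ih (by simpa [replicate_succ] using h)
      exact ⟨rfl, rfl⟩

lemma gapWord_inj {j g p j' g' p' : ℕ} (h : gapWord j g p = gapWord j' g' p') : j = j' ∧ g = g' := by
  obtain ⟨hj, h'⟩ := replicate_false_append_true_cons_inj h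
  exact ⟨hj, (replicate_false_append_true_cons_inj h').1⟩

lemma length_gapWord (j g p : ℕ) : (gapWord j g p).length = j + g + p + 2 := by
  simp [gapWord]
  omega

lemma gapWord_infix_sWord {i j p k : ℕ} (hj : j ≤ i + 1) (hp : p ≤ i + 3) (hk : i + 3 ≤ k) :
    gapWord j (i + 2) p <:+: sWord k := by
  refine IsInfix.trans ?_ (sBlock_append_infix_sWord hk)
  obtain ⟨u, hu⟩ : replicate j false ++ [true] <:+ sBlock i :=
    ⟨replicate (i + 1 - j) false, by rw [sBlock, ← append_assoc, ← replicate_add]; congr 2; omega⟩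
  obtain ⟨v, hv⟩ : replicate p false <+: sBlock (i + 2) :=
    ⟨replicate (i + 3 - p) false ++ [true], by
      rw [sBlock, ← append_assoc, ← replicate_add]; congr 2; omega⟩
  refine ⟨u, v, ?_⟩
  rw [← hu, ← hv, gapWord, sBlock]
  simp

lemma sq_div_le_delta_sWord {q k : ℕ} (hq : 1 ≤ q) (hk : 3 * q + 2 ≤ k) :
    ((q * q : ℕ) : ℚ) / (4 * q + 2 : ℕ) ≤ delta (sWord k) := by
  let S := (Finset.Ico (2 * q) (3 * q) ×ˢ Finset.range q).image
    fun x : ℕ × ℕ => gapWord x.2 (x.1 + 2) (4 * q - 2 - x.1 - x.2)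
  have hcard : S.card = q * q := by
    rw [Finset.card_image_of_injOn, Finset.card_product, Nat.card_Ico, Finset.card_range]
    · congr 1
      omega
    · rintro ⟨i, j⟩ - ⟨i', j'⟩ - h
      obtain ⟨rfl, hg⟩ := gapWord_inj h
      exact Prod.ext (by omega) rfl
  have hS : ∀ w ∈ S, w <:+: sWord k ∧ w.length = 4 * q + 2 := by
    simp only [S, Finset.mem_image, Finset.mem_product, Finset.mem_Ico, Finset.mem_range]
    rintro _ ⟨⟨i, j⟩, ⟨⟨hi, hi'⟩, hj⟩, rfl⟩
    exact ⟨gapWord_infix_sWord (by omega) (by omega) (by omega), by rw [length_gapWord]; omega⟩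
  have hS₀ : S.Nonempty := by
    rw [← Finset.card_pos, hcard]
    positivity
  exact hcard ▸ card_div_le_delta hS₀ hS (by omega)

lemma succ_div_le_delta_sWord {k : ℕ} (hk : 1 ≤ k) : ((k : ℚ) + 1) / 48 ≤ delta (sWord k) := by
  rcases le_or_gt k 4 with hk4 | hk4
  · have hne : sWord k ≠ [] := ne_nil_of_length_pos (by have := two_mul_length_sWord k; nlinarith)
    calc ((k : ℚ) + 1) / 48 ≤ 1 := by
          rw [div_le_one (by norm_num)]
          exact_mod_cast (by omega : k + 1 ≤ 48)
      _ ≤ delta (sWord k) := one_le_delta hne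
  · set q := (k - 2) / 3
    have hq : 1 ≤ q := by omega
    have hkq : (k : ℚ) + 1 ≤ 8 * q := by exact_mod_cast (by omega : k + 1 ≤ 8 * q)
    refine le_trans ?_ (sq_div_le_delta_sWord hq (by omega))
    rw [div_le_div_iff₀ (by norm_num) (by positivity)]
    push_cast
    have hq' : (1 : ℚ) ≤ q := by exact_mod_cast hq
    nlinarith [mul_le_mul_of_nonneg_right hkq (by positivity : (0 : ℚ) ≤ 4 * q + 2)]

/-- There is a constant `c > 0` with
`δ(s_k) ≥ c·√|s_k|` for all `k ≥ 1`: `δ = Ω(√n)` on the family `s_k`. -/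
theorem delta_sWord_sqrt_lower_bound :
    ∃ c : ℝ, 0 < c ∧ ∀ k : ℕ, 1 ≤ k →
      c * Real.sqrt ((sWord k).length) ≤ ((delta (sWord k) : ℚ) : ℝ) := by
  refine ⟨1 / 48, by norm_num, fun k hk => ?_⟩
  have hsqrt : Real.sqrt (sWord k).length ≤ k + 1 := by
    rw [Real.sqrt_le_left (by positivity)]
    have h := two_mul_length_sWord k
    exact_mod_cast (by nlinarith : (sWord k).length ≤ (k + 1) ^ 2)
  have hδ := Rat.cast_le (K := ℝ) |>.mpr (succ_div_le_delta_sWord hk)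
  push_cast at hδ
  linarith
end

section
/- There exists a universal constant C such that for every integer d ≥ 0 and every nonempty string T containing no substring of the form x⁴ with x a nonempty string: if some d-ISLP of size g generates T, then some SLP (i.e., an ISLP using only rules of forms A → a and A → BC) of size at most C·g generates T. (In any iteration rule A → ∏_{i=k1}^{k2} B_1^{i^{c_1}} ⋯ B_t^{i^{c_t}} of an ISLP generating such a T, if some c_r ≠ 0 then max(k1,k2) < 4, and if all c_r = 0 then |k1 − k2| < 3, so each iteration rule unfolds into standard SLP rules of total size O(t).) -/
/-!
In a fourth-power-free string `T`, an iteration rule whose expansion occurs in `T` unrolls into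
at most `9t` factors: an exponent `i ^ c ≥ 4` would put `w ^ 4` into `T`, and a range of at
least four indices `i ≥ 1` either has all exponents `0`, so that the product is the fourth power
of its block, or reaches an index `i ≥ 4` raised to a positive exponent. Since expansions are
unique, the variables can then be replaced one at a time, in topological order, by SLP rules:
one rule for `A → a` or `A → BC`, and `m - 1` binary rules for an iteration rule with `m ≤ 9t`
factors. This gives an SLP of size at most `9g`.
-/

def FourthPowerFree {α : Type} (T : List α) : Prop :=
  ∀ x : List α, x ≠ [] → ¬ (x ++ x ++ x ++ x) <:+: T

section Words

variable {α : Type}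

theorem FourthPowerFree.mono {T u : List α} (hT : FourthPowerFree T) (hu : u <:+: T) :
    FourthPowerFree u :=
  fun x hx h => hT x hx (h.trans hu)

theorem lt_four_of_fourthPowerFree_repList {w : List α} {k : ℕ} (hw : w ≠ [])
    (h : FourthPowerFree (repList w k)) : k < 4 := by
  by_contra! hk
  obtain ⟨m, rfl⟩ := Nat.exists_eq_add_of_le hk
  refine h w hw ⟨[], repList w m, ?_⟩
  simp [repList, List.replicate_add, List.replicate_succ, List.append_assoc]

theorem infix_iterExpand {ps : List (List α × ℕ)} {p : List α × ℕ} (hp : p ∈ ps) {i k1 k2 : ℕ}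
    (hi : i ∈ rangeK k1 k2) : repList p.1 (i ^ p.2) <:+: iterExpand k1 k2 ps :=
  (List.infix_of_mem_flatten (List.mem_map_of_mem hp)).trans
    (List.infix_of_mem_flatten (List.mem_map_of_mem (f := iterBlock ps) hi))

theorem mem_rangeK_left (k1 k2 : ℕ) : k1 ∈ rangeK k1 k2 := by
  unfold rangeK
  split <;> exact List.mem_map.2 ⟨0, List.mem_range.2 (by omega), by omega⟩

theorem max_mem_rangeK (k1 k2 : ℕ) : max k1 k2 ∈ rangeK k1 k2 := by
  unfold rangeK
  split
  · exact List.mem_map.2 ⟨k2 - k1, List.mem_range.2 (by omega), by omega⟩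
  · exact List.mem_map.2 ⟨0, List.mem_range.2 (by omega), by omega⟩

theorem length_rangeK (k1 k2 : ℕ) : (rangeK k1 k2).length = max k1 k2 + 1 - min k1 k2 := by
  unfold rangeK
  split <;> simp <;> omega

def iterFactors (k1 k2 : ℕ) (ps : List (List α × ℕ)) : List (List α) :=
  (rangeK k1 k2).flatMap fun i => ps.flatMap fun p => List.replicate (i ^ p.2) p.1

theorem flatten_iterFactors (k1 k2 : ℕ) (ps : List (List α × ℕ)) :
    (iterFactors k1 k2 ps).flatten = iterExpand k1 k2 ps := by
  unfold iterFactors iterExpand iterBlock repList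
  simp [List.flatMap_def, List.flatten_flatten, Function.comp_def]

theorem exists_of_mem_iterFactors {k1 k2 : ℕ} {ps : List (List α × ℕ)} {w : List α}
    (hw : w ∈ iterFactors k1 k2 ps) : ∃ p ∈ ps, p.1 = w := by
  simp only [iterFactors, List.mem_flatMap, List.mem_replicate] at hw
  obtain ⟨_, _, p, hp, _, rfl⟩ := hw
  exact ⟨p, hp, rfl⟩

theorem fst_mem_iterFactors {k1 k2 : ℕ} (hk1 : 1 ≤ k1) {ps : List (List α × ℕ)} {p : List α × ℕ}
    (hp : p ∈ ps) : p.1 ∈ iterFactors k1 k2 ps := by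
  simp only [iterFactors, List.mem_flatMap, List.mem_replicate]
  exact ⟨k1, mem_rangeK_left k1 k2, p, hp, by positivity, rfl⟩

theorem length_iterFactors_le {k1 k2 b : ℕ} {ps : List (List α × ℕ)}
    (hb : ∀ i ∈ rangeK k1 k2, ∀ p ∈ ps, i ^ p.2 ≤ b) :
    (iterFactors k1 k2 ps).length ≤ (rangeK k1 k2).length * (b * ps.length) := by
  rw [iterFactors, List.length_flatMap]
  refine (List.sum_le_card_nsmul _ (b * ps.length) fun n hn => ?_).trans_eq (by simp)
  obtain ⟨i, hi, rfl⟩ := List.mem_map.1 hn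
  rw [List.length_flatMap]
  refine (List.sum_le_card_nsmul _ b fun m hm => ?_).trans_eq (by simp [mul_comm])
  obtain ⟨p, hp, rfl⟩ := List.mem_map.1 hm
  simpa using hb i hi p hp

end Words

section IterBounds

variable {α : Type} {k1 k2 : ℕ} {ps : List (List α × ℕ)}

theorem pow_lt_four_of_fourthPowerFree (h : FourthPowerFree (iterExpand k1 k2 ps)) {i : ℕ}
    (hi : i ∈ rangeK k1 k2) {p : List α × ℕ} (hp : p ∈ ps) (hne : p.1 ≠ []) : i ^ p.2 < 4 :=
  lt_four_of_fourthPowerFree_repList hne (h.mono (infix_iterExpand hp hi))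

theorem length_rangeK_lt_four_of_fourthPowerFree (h : FourthPowerFree (iterExpand k1 k2 ps))
    (hk1 : 1 ≤ k1) (hk2 : 1 ≤ k2) (hps : ps ≠ []) (hne : ∀ p ∈ ps, p.1 ≠ []) :
    (rangeK k1 k2).length < 4 := by
  obtain ⟨p, hp⟩ := List.exists_mem_of_ne_nil ps hps
  by_cases hc : ∀ q ∈ ps, q.2 = 0
  · have hpow : iterExpand k1 k2 ps = repList (iterBlock ps 1) (rangeK k1 k2).length := by
      refine congrArg List.flatten (List.eq_replicate_iff.2 ⟨by simp, ?_⟩)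
      simp only [List.mem_map]
      rintro _ ⟨i, -, rfl⟩
      exact congrArg List.flatten (List.map_congr_left fun q hq => by simp [hc q hq])
    have hblock : p.1 <:+: iterBlock ps 1 := by
      have := List.infix_of_mem_flatten (List.mem_map_of_mem
        (f := fun q : List α × ℕ => repList q.1 (1 ^ q.2)) hp)
      simpa [repList, iterBlock] using this
    exact lt_four_of_fourthPowerFree_repList
      (fun hnil => hne p hp (List.eq_nil_of_infix_nil (hnil ▸ hblock))) (hpow ▸ h)
  · -- the largest index `i` occurs with a positive exponent, so `i ≤ i ^ c < 4`
    obtain ⟨q, hq, hc⟩ := not_forall₂.1 hc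
    have hmax := pow_lt_four_of_fourthPowerFree h (max_mem_rangeK k1 k2) hq (hne q hq)
    have := Nat.le_self_pow hc (max k1 k2)
    rw [length_rangeK]
    omega

theorem length_iterFactors_le_of_fourthPowerFree (h : FourthPowerFree (iterExpand k1 k2 ps))
    (hk1 : 1 ≤ k1) (hk2 : 1 ≤ k2) (hne : ∀ p ∈ ps, p.1 ≠ []) :
    (iterFactors k1 k2 ps).length ≤ 9 * ps.length := by
  by_cases hps : ps = []
  · simp [hps, iterFactors]
  have hlen := length_rangeK_lt_four_of_fourthPowerFree h hk1 hk2 hps hne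
  calc (iterFactors k1 k2 ps).length ≤ (rangeK k1 k2).length * (3 * ps.length) :=
        length_iterFactors_le fun i hi p hp =>
          Nat.le_of_lt_succ (pow_lt_four_of_fourthPowerFree h hi hp (hne p hp))
    _ ≤ 3 * (3 * ps.length) := Nat.mul_le_mul_right _ (by omega)
    _ = 9 * ps.length := by ring

end IterBounds

namespace List

variable {β γ δ : Type*}

theorem Forall₂.exists_mem_left {R : β → γ → Prop} {l₁ : List β} {l₂ : List γ}
    (h : Forall₂ R l₁ l₂) {b : γ} (hb : b ∈ l₂) : ∃ a ∈ l₁, R a b := by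
  induction h with
  | nil => cases hb
  | cons hab _ ih =>
    rcases mem_cons.1 hb with rfl | hb
    · exact ⟨_, mem_cons_self, hab⟩
    · obtain ⟨a, ha, hR⟩ := ih hb
      exact ⟨a, mem_cons_of_mem _ ha, hR⟩

theorem Forall₂.eq_of_forall₂ {R S : β → γ → Prop} {l : List β} {l₁ l₂ : List γ}
    (h₁ : Forall₂ R l l₁) (h₂ : Forall₂ S l l₂) (H : ∀ a b c, R a b → S a c → b = c) :
    l₁ = l₂ := by
  induction h₁ generalizing l₂ with
  | nil => exact (forall₂_nil_left_iff.1 h₂).symm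
  | cons hab _ ih =>
    obtain ⟨c, l', hac, h', rfl⟩ := forall₂_cons_left_iff.1 h₂
    rw [H _ _ _ hab hac, ih h']

theorem forall₂_of_mem_zip_of_map_snd_eq {R : β × δ → γ × δ → Prop} {l₁ : List (β × δ)}
    {l₂ : List (γ × δ)} (hsnd : l₂.map Prod.snd = l₁.map Prod.snd)
    (hR : ∀ q ∈ l₁.zip l₂, R q.1 q.2) : Forall₂ (fun a b => R a b ∧ b.2 = a.2) l₁ l₂ := by
  have heq : Forall₂ (fun a b => b.2 = a.2) l₁ l₂ := by
    have : Forall₂ (· = ·) (l₂.map Prod.snd) (l₁.map Prod.snd) := by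
      rw [forall₂_eq_eq_eq]; exact hsnd
    simpa only [forall₂_map_left_iff, forall₂_map_right_iff] using this.flip
  exact forall₂_iff_zip.2 ⟨heq.length_eq, fun hq => ⟨hR _ hq, forall₂_zip heq hq⟩⟩

end List

namespace ISLPRule

variable {α : Type} {N M : ℕ}

def rename (f : Fin N → Fin M) : ISLPRule α N → ISLPRule α M
  | .term a => .term a
  | .pair B C => .pair (f B) (f C)
  | .iter k1 k2 Bs => .iter k1 k2 (Bs.map (Prod.map f id))

theorem vars_rename (f : Fin N → Fin M) (r : ISLPRule α N) :
    (r.rename f).vars = r.vars.map f := by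
  cases r <;> simp [rename, vars, Function.comp_def]

theorem size_rename (f : Fin N → Fin M) (r : ISLPRule α N) : (r.rename f).size = r.size := by
  cases r <;> simp [rename, size]

theorem isSLP_rename (f : Fin N → Fin M) {r : ISLPRule α N} (hr : r.isSLP) :
    (r.rename f).isSLP := by
  cases r <;> trivial

theorem Ok.of_isSLP {d : ℕ} {r : ISLPRule α N} (hr : r.isSLP) : r.Ok d := by
  cases r <;> trivial

end ISLPRule

namespace ISLP.Expands

variable {α : Type} {N : ℕ} {rule : Fin N → ISLPRule α N}

theorem rename {M : ℕ} {rule' : Fin M → ISLPRule α M} {f : Fin N → Fin M}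
    (hf : ∀ A, rule' (f A) = (rule A).rename f) {A : Fin N} {w : List α}
    (h : Expands rule A w) : Expands rule' (f A) w := by
  induction h with
  | term hr => exact .term (by rw [hf, hr]; rfl)
  | pair hr _ _ ihu ihv => exact .pair (by rw [hf, hr]; rfl) ihu ihv
  | @iter A k1 k2 Bs ps hr hsnd _ ih =>
    refine .iter (Bs := Bs.map (Prod.map f id)) (by rw [hf, hr]; rfl)
      (by simpa [Function.comp_def] using hsnd) fun q hq => ?_
    rw [List.zip_map_left, List.mem_map] at hq
    obtain ⟨q, hq, rfl⟩ := hq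
    exact ih q hq

theorem unique {A : Fin N} {u v : List α} (hu : Expands rule A u) (hv : Expands rule A v) :
    u = v := by
  induction hu generalizing v with
  | term hr =>
    cases hv <;> simp_all
  | pair hr _ _ ihu ihv =>
    cases hv with
    | pair hr' hu' hv' =>
      rw [hr] at hr'
      cases hr'
      rw [ihu hu', ihv hv']
    | _ => simp_all
  | iter hr hsnd _ ih =>
    cases hv with
    | iter hr' hsnd' hz' =>
      rw [hr] at hr'
      cases hr'
      congr 1
      exact (List.forall₂_of_mem_zip_of_map_snd_eq
          (R := fun b p => ∀ v, Expands rule b.1 v → p.1 = v) hsnd ih).eq_of_forall₂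
        (List.forall₂_of_mem_zip_of_map_snd_eq (R := fun b p => Expands rule b.1 p.1) hsnd' hz')
        fun _ _ _ hp hp' => Prod.ext (hp.1 _ hp'.1) (hp.2.trans hp'.2.symm)
    | _ => simp_all

theorem ne_nil {d : ℕ} (hok : ∀ A, (rule A).Ok d) {A : Fin N} {w : List α}
    (h : Expands rule A w) : w ≠ [] := by
  induction h with
  | term => simp
  | pair _ _ _ ihu => simp [ihu]
  | @iter A k1 k2 Bs ps hr hsnd _ ih =>
    obtain ⟨hk1, -, hBs, -⟩ := hr ▸ hok A
    obtain ⟨b, hb⟩ := List.exists_mem_of_ne_nil Bs hBs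
    have hargs := List.forall₂_of_mem_zip_of_map_snd_eq (R := fun _ p => p.1 ≠ []) hsnd ih
    obtain ⟨p, hp, hp1, -⟩ := hargs.flip.exists_mem_left hb
    rw [← flatten_iterFactors, Ne, List.flatten_eq_nil_iff]
    exact fun hall => hp1 (hall _ (fst_mem_iterFactors (k2 := k2) hk1 hp))

end ISLP.Expands

structure SLP (α : Type) : Type where
  N : ℕ
  rule : Fin N → ISLPRule α N
  isSLP : ∀ A, (rule A).isSLP
  acyclic : ∀ A, ∀ B ∈ (rule A).vars, B < A

namespace SLP

variable {α : Type}

def size (S : SLP α) : ℕ := ∑ A, (S.rule A).size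

def Derives (S : SLP α) (w : List α) : Prop := ∃ A, ISLP.Expands S.rule A w

def empty : SLP α where
  N := 0
  rule := Fin.elim0
  isSLP := nofun
  acyclic := nofun

def snoc (S : SLP α) (r : ISLPRule α S.N) (hr : r.isSLP) : SLP α where
  N := S.N + 1
  rule := Fin.lastCases (r.rename Fin.castSucc) fun A => (S.rule A).rename Fin.castSucc
  isSLP := Fin.lastCases (by simpa using r.isSLP_rename Fin.castSucc hr)
    fun A => by simpa using (S.rule A).isSLP_rename Fin.castSucc (S.isSLP A)
  acyclic := by
    refine Fin.lastCases ?_ fun A => ?_ <;>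
      simp only [Fin.lastCases_last, Fin.lastCases_castSucc, ISLPRule.vars_rename, List.mem_map]
    · rintro _ ⟨B, -, rfl⟩
      exact Fin.castSucc_lt_last B
    · rintro _ ⟨B, hB, rfl⟩
      exact Fin.castSucc_lt_castSucc_iff.2 (S.acyclic A B hB)

def toISLP (S : SLP α) (d : ℕ) (start : Fin S.N) : ISLP α d where
  N := S.N
  rule := S.rule
  start := start
  ok A := .of_isSLP (S.isSLP A)
  acyclic := S.acyclic

variable {S : SLP α} {r : ISLPRule α S.N} {hr : r.isSLP}

theorem rule_snoc_last : (S.snoc r hr).rule (Fin.last S.N) = r.rename Fin.castSucc := by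
  simp [snoc]

theorem rule_snoc_castSucc (A : Fin S.N) :
    (S.snoc r hr).rule A.castSucc = (S.rule A).rename Fin.castSucc := by
  simp [snoc]

theorem size_snoc : (S.snoc r hr).size = S.size + r.size := by
  change ∑ A : Fin (S.N + 1), _ = _
  rw [Fin.sum_univ_castSucc]
  simp only [rule_snoc_last, rule_snoc_castSucc]
  exact congrArg₂ (· + ·) (Finset.sum_congr rfl fun A _ => ISLPRule.size_rename _ _)
    (ISLPRule.size_rename _ _)

theorem expands_snoc_castSucc {A : Fin S.N} {w : List α} (h : ISLP.Expands S.rule A w) :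
    ISLP.Expands (S.snoc r hr).rule A.castSucc w :=
  h.rename rule_snoc_castSucc

theorem derives_le_derives_snoc : S.Derives ≤ (S.snoc r hr).Derives :=
  fun _ ⟨A, hA⟩ => ⟨A.castSucc, expands_snoc_castSucc hA⟩

theorem exists_derives_singleton (S : SLP α) (a : α) :
    ∃ S' : SLP α, S'.size = S.size + 1 ∧ S.Derives ≤ S'.Derives ∧ S'.Derives [a] :=
  ⟨S.snoc (.term a) trivial, size_snoc, derives_le_derives_snoc,
    Fin.last _, .term rule_snoc_last⟩

theorem exists_derives_append {u v : List α} (hu : S.Derives u) (hv : S.Derives v) :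
    ∃ S' : SLP α, S'.size = S.size + 2 ∧ S.Derives ≤ S'.Derives ∧ S'.Derives (u ++ v) := by
  obtain ⟨B, hB⟩ := hu
  obtain ⟨C, hC⟩ := hv
  exact ⟨S.snoc (.pair B C) trivial, size_snoc, derives_le_derives_snoc, Fin.last _,
    .pair rule_snoc_last (expands_snoc_castSucc hB) (expands_snoc_castSucc hC)⟩

theorem exists_derives_flatten {ws : List (List α)} (hws : ws ≠ [])
    (h : ∀ w ∈ ws, S.Derives w) :
    ∃ S' : SLP α, S'.size ≤ S.size + 2 * (ws.length - 1) ∧ S.Derives ≤ S'.Derives ∧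
      S'.Derives ws.flatten := by
  induction ws generalizing S with
  | nil => exact absurd rfl hws
  | cons w ws ih =>
    by_cases hnil : ws = []
    · subst hnil
      exact ⟨S, by simp, le_rfl, by simpa using h w List.mem_cons_self⟩
    obtain ⟨S₁, hsize₁, hle₁, hder₁⟩ := ih hnil fun x hx => h x (List.mem_cons_of_mem _ hx)
    obtain ⟨S₂, hsize₂, hle₂, hder₂⟩ :=
      exists_derives_append (hle₁ _ (h w List.mem_cons_self)) hder₁
    have := List.length_pos_iff.2 hnil
    refine ⟨S₂, ?_, hle₁.trans hle₂, by simpa using hder₂⟩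
    simp only [List.length_cons]
    omega

end SLP

namespace ISLP

variable {α : Type} {d : ℕ} {G : ISLP α d} {T : List α}

theorem exists_slp_derives_expansion (hT : FourthPowerFree T) (S : SLP α) {A : Fin G.N}
    (hvar : ∀ B ∈ (G.rule A).vars, ∀ u, Expands G.rule B u → u <:+: T → S.Derives u)
    {w : List α} (hA : Expands G.rule A w) (hw : w <:+: T) :
    ∃ S' : SLP α, S'.size ≤ S.size + 9 * (G.rule A).size ∧ S.Derives ≤ S'.Derives ∧
      S'.Derives w := by
  have hw_ne := hA.ne_nil G.ok
  cases hA with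
  | term hr =>
    obtain ⟨S', hsize, hle, hder⟩ := S.exists_derives_singleton _
    exact ⟨S', by simp [hsize, hr, ISLPRule.size], hle, hder⟩
  | @pair _ B C u v hr hu hv =>
    obtain ⟨S', hsize, hle, hder⟩ := SLP.exists_derives_append
      (hvar B (by simp [hr, ISLPRule.vars]) u hu ((List.prefix_append u v).isInfix.trans hw))
      (hvar C (by simp [hr, ISLPRule.vars]) v hv ((List.suffix_append u v).isInfix.trans hw))
    exact ⟨S', by simp [hsize, hr, ISLPRule.size], hle, hder⟩
  | @iter _ k1 k2 Bs ps hr hsnd hz =>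
    obtain ⟨hk1, hk2, -, -⟩ := hr ▸ G.ok A
    have hargs := List.forall₂_of_mem_zip_of_map_snd_eq
      (R := fun b p => Expands G.rule b.1 p.1) hsnd hz
    have hne : ∀ p ∈ ps, p.1 ≠ [] := fun p hp =>
      let ⟨_, _, hbp, _⟩ := hargs.exists_mem_left hp
      hbp.ne_nil G.ok
    have hfactors : ∀ x ∈ iterFactors k1 k2 ps, S.Derives x := by
      intro x hx
      obtain ⟨p, hp, rfl⟩ := exists_of_mem_iterFactors hx
      obtain ⟨b, hb, hbp, -⟩ := hargs.exists_mem_left hp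
      refine hvar b.1 (by simp only [hr, ISLPRule.vars]; exact List.mem_map_of_mem hb) _ hbp ?_
      exact (List.infix_of_mem_flatten hx).trans (flatten_iterFactors k1 k2 ps ▸ hw)
    have hlen := length_iterFactors_le_of_fourthPowerFree (hT.mono hw) hk1 hk2 hne
    obtain ⟨S', hsize, hle, hder⟩ := SLP.exists_derives_flatten
      (fun h => hw_ne (by rw [← flatten_iterFactors, h, List.flatten_nil])) hfactors
    refine ⟨S', ?_, hle, flatten_iterFactors k1 k2 ps ▸ hder⟩
    rw [hr, ISLPRule.size, hargs.length_eq]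
    omega

theorem exists_slp_derives_expansions (G : ISLP α d) (hT : FourthPowerFree T) :
    ∃ S : SLP α, S.size ≤ 9 * G.size ∧
      ∀ A w, Expands G.rule A w → w <:+: T → S.Derives w := by
  suffices h : ∀ n, ∃ S : SLP α, S.size ≤ 9 * ∑ B with B.val < n, (G.rule B).size ∧
      ∀ A : Fin G.N, A.val < n → ∀ w, Expands G.rule A w → w <:+: T → S.Derives w by
    obtain ⟨S, hsize, hS⟩ := h G.N
    refine ⟨S, ?_, fun A => hS A A.isLt⟩
    rwa [Finset.filter_true_of_mem fun A _ => A.isLt] at hsize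
  intro n
  induction n with
  | zero => exact ⟨SLP.empty, by simp [SLP.size, SLP.empty], by simp⟩
  | succ n ih =>
    obtain ⟨S, hsize, hS⟩ := ih
    by_cases hnew : ∃ A : Fin G.N, A.val = n ∧ ∃ w, Expands G.rule A w ∧ w <:+: T
    · obtain ⟨A, rfl, w, hA, hw⟩ := hnew
      obtain ⟨S', hsize', hle, hder⟩ :=
        exists_slp_derives_expansion hT S (fun B hB => hS B (G.acyclic A B hB)) hA hw
      have hfilter : Finset.univ.filter (fun B : Fin G.N => B.val < A.val + 1) =
          insert A (Finset.univ.filter fun B => B.val < A.val) := by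
        ext B
        simp only [Finset.mem_filter, Finset.mem_univ, true_and, Finset.mem_insert, Fin.ext_iff]
        omega
      refine ⟨S', ?_, fun B hB u hu huT => ?_⟩
      · rw [hfilter, Finset.sum_insert (by simp)]
        omega
      · rcases Nat.lt_succ_iff_lt_or_eq.1 hB with hB | hB
        · exact hle _ (hS B hB u hu huT)
        · obtain rfl := Fin.ext hB
          exact hu.unique hA ▸ hder
    · refine ⟨S, hsize.trans ?_, fun B hB u hu huT => ?_⟩
      · refine Nat.mul_le_mul_left _ (Finset.sum_le_sum_of_subset fun B => ?_)
        simp only [Finset.mem_filter, Finset.mem_univ, true_and]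
        omega
      · rcases Nat.lt_succ_iff_lt_or_eq.1 hB with hB | hB
        · exact hS B hB u hu huT
        · exact absurd ⟨B, hB, u, hu, huT⟩ hnew

end ISLP

/-- There is a universal constant `C` such that for every
`d ≥ 0` and every nonempty string `T` with no fourth-power substring, any
`d`-ISLP of size `g` generating `T` can be converted into an SLP (an ISLP
using only rules `A → a` and `A → BC`) of size at most `C·g` generating `T`. -/
theorem fourth_power_free_islp_to_slp :
    ∃ C : ℕ, ∀ (α : Type) [Fintype α] (d : ℕ) (T : List α), T ≠ [] →
      (∀ x : List α, x ≠ [] → ¬ (x ++ x ++ x ++ x) <:+: T) →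
      ∀ G : ISLP α d, G.Generates T →
        ∃ G' : ISLP α d, (∀ A, (G'.rule A).isSLP) ∧ G'.Generates T ∧
          G'.size ≤ C * G.size := by
  refine ⟨9, fun α _ d T _ hT G hG => ?_⟩
  obtain ⟨S, hsize, hS⟩ := G.exists_slp_derives_expansions hT
  obtain ⟨X, hX⟩ := hS G.start T hG (List.infix_refl T)
  exact ⟨S.toISLP d X, S.isSLP, hX, hsize⟩
end

section
/- For every integer d ≥ 0 and every d-ISLP G of size g generating a string T, there exists a d-ISLP of size at most g generating the reversed string T^R. -/
theorem List.reverse_zip {β γ : Type*} {l : List β} {l' : List γ} (h : l.length = l'.length) :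
    (l.zip l').reverse = l.reverse.zip l'.reverse := by
  simp only [List.zip_eq_zipWith, List.reverse_zipWith h]

theorem repList_reverse {α : Type} (w : List α) (k : ℕ) :
    (repList w k).reverse = repList w.reverse k := by
  simp [repList, List.reverse_flatten]

theorem iterBlock_reverse {α : Type} (ps : List (List α × ℕ)) (i : ℕ) :
    (iterBlock ps i).reverse = iterBlock (ps.reverse.map fun p => (p.1.reverse, p.2)) i := by
  simp [iterBlock, List.reverse_flatten, repList_reverse, Function.comp_def]

theorem rangeK_eq (k1 k2 : ℕ) :
    rangeK k1 k2 = if k1 ≤ k2 then List.range' k1 (k2 + 1 - k1)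
      else (List.range' k2 (k1 + 1 - k2)).reverse := by
  unfold rangeK
  split_ifs with h
  · exact List.range'_eq_map_range.symm
  · rw [List.reverse_range']
    refine List.map_congr_left fun j _ => ?_
    omega

theorem rangeK_reverse (k1 k2 : ℕ) : (rangeK k1 k2).reverse = rangeK k2 k1 := by
  rcases lt_trichotomy k1 k2 with h | rfl | h
  · rw [rangeK_eq, rangeK_eq, if_pos h.le, if_neg (not_le.mpr h)]
  · simp [rangeK_eq]
  · rw [rangeK_eq, rangeK_eq, if_neg (not_le.mpr h), if_pos h.le, List.reverse_reverse]

theorem iterExpand_reverse {α : Type} (k1 k2 : ℕ) (ps : List (List α × ℕ)) :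
    (iterExpand k1 k2 ps).reverse
      = iterExpand k2 k1 (ps.reverse.map fun p => (p.1.reverse, p.2)) := by
  simp only [iterExpand, List.reverse_flatten, ← List.map_reverse, rangeK_reverse, List.map_map,
    Function.comp_def, iterBlock_reverse]

namespace ISLPRule

variable {α : Type} {N : ℕ}

def reverse : ISLPRule α N → ISLPRule α N
  | .term a => .term a
  | .pair B C => .pair C B
  | .iter k1 k2 Bs => .iter k2 k1 Bs.reverse

@[simp]
theorem size_reverse (r : ISLPRule α N) : r.reverse.size = r.size := by
  cases r <;> simp [reverse, size]

theorem Ok.reverse {d : ℕ} {r : ISLPRule α N} (h : r.Ok d) : r.reverse.Ok d := by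
  cases r with
  | term => trivial
  | pair => trivial
  | iter k1 k2 Bs =>
    obtain ⟨hk1, hk2, hBs, hc⟩ := h
    exact ⟨hk2, hk1, List.reverse_ne_nil_iff.mpr hBs, fun p hp => hc p (List.mem_reverse.mp hp)⟩

@[simp]
theorem mem_vars_reverse {r : ISLPRule α N} {B : Fin N} : B ∈ r.reverse.vars ↔ B ∈ r.vars := by
  cases r <;> simp [reverse, vars, or_comm]

end ISLPRule

namespace ISLP

variable {α : Type} {d : ℕ}

theorem Expands.reverse {N : ℕ} {rule : Fin N → ISLPRule α N} {A : Fin N} {w : List α}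
    (h : Expands rule A w) : Expands (fun X => (rule X).reverse) A w.reverse := by
  induction h with
  | term hA => exact .term (by simp [hA, ISLPRule.reverse])
  | pair hA _ _ ihB ihC =>
    rw [List.reverse_append]
    exact .pair (by simp [hA, ISLPRule.reverse]) ihC ihB
  | @iter A k1 k2 Bs ps hA hexp _ ih =>
    have hlen : Bs.length = ps.length := by simpa using (congrArg List.length hexp).symm
    rw [iterExpand_reverse]
    refine .iter (Bs := Bs.reverse) (by simp [hA, ISLPRule.reverse]) ?_ fun q hq => ?_
    · simpa [Function.comp_def] using congrArg List.reverse hexp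
    · rw [List.zip_map_right, ← List.reverse_zip hlen, List.mem_map] at hq
      obtain ⟨q, hq, rfl⟩ := hq
      exact ih q (List.mem_reverse.mp hq)

def reverse (G : ISLP α d) : ISLP α d where
  N := G.N
  rule A := (G.rule A).reverse
  start := G.start
  ok A := (G.ok A).reverse
  acyclic A B hB := G.acyclic A B (ISLPRule.mem_vars_reverse.mp hB)

theorem Generates.reverse {G : ISLP α d} {T : List α} (h : G.Generates T) :
    G.reverse.Generates T.reverse :=
  Expands.reverse h

@[simp]
theorem size_reverse (G : ISLP α d) : G.reverse.size = G.size :=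
  Finset.sum_congr rfl fun A _ => (G.rule A).size_reverse

end ISLP

theorem islp_reverse_general {α : Type} (d : ℕ) (G : ISLP α d) (T : List α)
    (hG : G.Generates T) :
    ∃ G' : ISLP α d, G'.Generates T.reverse ∧ G'.size ≤ G.size :=
  ⟨G.reverse, hG.reverse, G.size_reverse.le⟩

/-- For every `d ≥ 0` and every `d`-ISLP `G` generating `T`,
there is a `d`-ISLP of size at most that of `G` generating the reversal `T^R`. -/
theorem islp_reverse {α : Type} [Fintype α] (d : ℕ) (G : ISLP α d) (T : List α)
    (hG : G.Generates T) :
    ∃ G' : ISLP α d, G'.Generates T.reverse ∧ G'.size ≤ G.size :=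
  islp_reverse_general d G T hG
end

section
/- For every non-erasing string morphism φ : Σ* → Σ'* there exists a constant c_φ, depending only on φ, such that for every integer d ≥ 0 and every d-ISLP of size g generating a string T, there exists a d-ISLP of size at most g + c_φ generating φ(T). -/
section MorphAux

open ISLPRule

lemma flatMap_flatten' {α β : Type} (g : α → List β) (l : List (List α)) :
    l.flatten.flatMap g = (l.map (·.flatMap g)).flatten := by
  induction l with
  | nil => simp
  | cons h t ih => simp [List.flatMap_append, ih]

lemma repList_flatMap {α β : Type} (g : α → List β) (w : List α) (k : ℕ) :
    (repList w k).flatMap g = repList (w.flatMap g) k := by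
  induction k with
  | zero => simp [repList]
  | succ k ih =>
      have h1 : repList w (k+1) = w ++ repList w k := by
        simp [repList, List.replicate_succ]
      have h2 : repList (w.flatMap g) (k+1) = w.flatMap g ++ repList (w.flatMap g) k := by
        simp [repList, List.replicate_succ]
      rw [h1, h2, List.flatMap_append, ih]

lemma iterBlock_flatMap {α β : Type} (g : α → List β) (ps : List (List α × ℕ)) (i : ℕ) :
    (iterBlock ps i).flatMap g = iterBlock (ps.map fun p => (p.1.flatMap g, p.2)) i := by
  simp only [iterBlock, flatMap_flatten', List.map_map]
  congr 1
  apply List.map_congr_left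
  intro p _
  exact repList_flatMap g p.1 (i ^ p.2)

lemma iterExpand_flatMap {α β : Type} (g : α → List β) (k1 k2 : ℕ) (ps : List (List α × ℕ)) :
    (iterExpand k1 k2 ps).flatMap g = iterExpand k1 k2 (ps.map fun p => (p.1.flatMap g, p.2)) := by
  simp only [iterExpand, flatMap_flatten', List.map_map]
  congr 1
  apply List.map_congr_left
  intro i _
  exact iterBlock_flatMap g ps i

lemma zip_map_same {β γ δ : Type*} (g : β → γ) (h : β → δ) (l : List β) :
    (l.map g).zip (l.map h) = l.map fun b => (g b, h b) := by
  induction l <;> simp_all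

lemma flatten_map_singleton {β : Type} (l : List β) :
    (l.map fun b => [b]).flatten = l := by
  induction l <;> simp_all

lemma expands_nonempty {α : Type} {N : ℕ} {d : ℕ} {rule : Fin N → ISLPRule α N}
    (hok : ∀ A, (rule A).Ok d) {A : Fin N} {w : List α}
    (h : ISLP.Expands rule A w) : Nonempty α := by
  induction h with
  | term hr => rename_i A a; exact ⟨a⟩
  | pair _ _ _ ihu _ => exact ihu
  | iter hr hps hq ih =>
      rename_i A k1 k2 Bs ps
      have hokA := hok A
      rw [hr] at hokA
      obtain ⟨-, -, hne, -⟩ := hokA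
      have hpsne : ps ≠ [] := by
        intro hh
        apply hne
        rw [hh] at hps
        simpa using (List.map_eq_nil_iff.mp hps.symm)
      have : Bs.zip ps ≠ [] := by
        cases Bs with
        | nil => exact absurd rfl hne
        | cons b bs => cases ps with
          | nil => exact absurd rfl hpsne
          | cons p pp => simp [List.zip]
      obtain ⟨q, hq'⟩ := List.exists_mem_of_ne_nil _ this
      exact ih q hq'

variable {α β : Type} [Fintype α] [Fintype β] (f : α → List β) (b0 : β) {d : ℕ} (G : ISLP α d)

noncomputable def charIdx (b : β) : Fin (Fintype.card β + Fintype.card α + G.N) :=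
  Fin.castAdd G.N (Fin.castAdd (Fintype.card α) (Fintype.equivFin β b))

noncomputable def haIdx (a : α) : Fin (Fintype.card β + Fintype.card α + G.N) :=
  Fin.castAdd G.N (Fin.natAdd (Fintype.card β) (Fintype.equivFin α a))

def shiftIdx (A : Fin G.N) : Fin (Fintype.card β + Fintype.card α + G.N) :=
  Fin.natAdd (Fintype.card β + Fintype.card α) A

noncomputable def mSigmaAux (A : Fin G.N) :
    ISLPRule α G.N → Fin (Fintype.card β + Fintype.card α + G.N)
  | .term a => haIdx G a
  | .pair _ _ => shiftIdx G A
  | .iter _ _ _ => shiftIdx G A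

noncomputable def mSigma (A : Fin G.N) : Fin (Fintype.card β + Fintype.card α + G.N) :=
  mSigmaAux G A (G.rule A)

noncomputable def shiftRule : ISLPRule α G.N → ISLPRule β (Fintype.card β + Fintype.card α + G.N)
  | .term _ => .term b0
  | .pair B C => .pair (mSigma G B) (mSigma G C)
  | .iter k1 k2 Bs => .iter k1 k2 (Bs.map fun p => (mSigma G p.1, p.2))

noncomputable def haRule (a : α) : ISLPRule β (Fintype.card β + Fintype.card α + G.N) :=
  .iter 1 1 ((f a).map fun b => (charIdx G b, 0))

noncomputable def morphRule : Fin (Fintype.card β + Fintype.card α + G.N) →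
    ISLPRule β (Fintype.card β + Fintype.card α + G.N) :=
  Fin.addCases
    (Fin.addCases
      (fun i => .term ((Fintype.equivFin β).symm i))
      (fun i => haRule f G ((Fintype.equivFin α).symm i)))
    (fun A => shiftRule b0 G (G.rule A))

lemma morphRule_charIdx (b : β) : morphRule f b0 G (charIdx G b) = .term b := by
  unfold morphRule charIdx
  rw [Fin.addCases_left, Fin.addCases_left, Equiv.symm_apply_apply]

lemma morphRule_haIdx (a : α) : morphRule f b0 G (haIdx G a) = haRule f G a := by
  unfold morphRule haIdx
  rw [Fin.addCases_left, Fin.addCases_right, Equiv.symm_apply_apply]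

lemma morphRule_shiftIdx (A : Fin G.N) :
    morphRule f b0 G (shiftIdx G A) = shiftRule b0 G (G.rule A) := by
  unfold morphRule shiftIdx
  rw [Fin.addCases_right]

lemma morphRule_natAdd (A : Fin G.N) :
    morphRule f b0 G (Fin.natAdd (Fintype.card β + Fintype.card α) A) =
      shiftRule b0 G (G.rule A) :=
  morphRule_shiftIdx f b0 G A

lemma iterExpand_one {γ : Type} (ps : List (List γ × ℕ)) :
    iterExpand 1 1 ps = iterBlock ps 1 := by
  have : rangeK 1 1 = [1] := rfl
  simp [iterExpand, this]

lemma expands_haIdx (a : α) :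
    ISLP.Expands (morphRule f b0 G) (haIdx G a) (f a) := by
  have h : f a = iterExpand 1 1 ((f a).map fun b => ([b], (0:ℕ))) := by
    rw [iterExpand_one]
    simp only [iterBlock, List.map_map, Function.comp_def, pow_zero]
    have : ∀ b : β, repList [b] 1 = [b] := by intro b; simp [repList]
    simp only [this]
    exact (flatten_map_singleton (f a)).symm
  rw [h]
  refine ISLP.Expands.iter (morphRule_haIdx f b0 G a) ?_ ?_
  · simp [haRule, List.map_map]
  · intro q hq
    rw [zip_map_same] at hq
    obtain ⟨b, hb, rfl⟩ := List.mem_map.mp hq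
    exact ISLP.Expands.term (morphRule_charIdx f b0 G b)

lemma expands_mSigma {A : Fin G.N} {w : List α}
    (h : ISLP.Expands G.rule A w) :
    ISLP.Expands (morphRule f b0 G) (mSigma G A) (w.flatMap f) := by
  induction h with
  | term hr =>
      rename_i A a
      have hs : mSigma (β := β) G A = haIdx (β := β) G a := by unfold mSigma; rw [hr]; rfl
      rw [hs]
      simpa using expands_haIdx f b0 G a
  | pair hr hu hv ihu ihv =>
      rename_i A B C u v
      have hs : mSigma (β := β) G A = shiftIdx (β := β) G A := by unfold mSigma; rw [hr]; rfl
      rw [hs, List.flatMap_append]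
      refine ISLP.Expands.pair ?_ ihu ihv
      rw [morphRule_shiftIdx, hr]
      rfl
  | iter hr hps hq ih =>
      rename_i A k1 k2 Bs ps
      have hs : mSigma (β := β) G A = shiftIdx (β := β) G A := by unfold mSigma; rw [hr]; rfl
      rw [hs, iterExpand_flatMap]
      refine ISLP.Expands.iter (Bs := Bs.map fun p => (mSigma G p.1, p.2)) ?_ ?_ ?_
      · rw [morphRule_shiftIdx, hr]
        rfl
      · simp only [List.map_map, Function.comp_def]
        exact hps
      · intro q hq
        rw [List.zip_map] at hq
        obtain ⟨p, hp, rfl⟩ := List.mem_map.mp hq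
        exact ih p hp

lemma mSigma_lt_shiftIdx {X A : Fin G.N} (h : X < A) :
    mSigma (β := β) G X < shiftIdx (β := β) G A := by
  unfold mSigma mSigmaAux
  rcases hr : G.rule X with a | ⟨B, C⟩ | ⟨k1, k2, Bs⟩
  · simp only [haIdx, shiftIdx, Fin.lt_def, Fin.coe_castAdd, Fin.coe_natAdd]
    have := (Fintype.equivFin α a).isLt
    omega
  · simp only [shiftIdx, Fin.lt_def, Fin.coe_natAdd]
    omega
  · simp only [shiftIdx, Fin.lt_def, Fin.coe_natAdd]
    omega

lemma shiftRule_size (r : ISLPRule α G.N) : (shiftRule b0 G r).size = r.size := by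
  cases r <;> simp [shiftRule, ISLPRule.size]

lemma morph_size :
    (∑ i : Fin (Fintype.card β + Fintype.card α + G.N), (morphRule f b0 G i).size) =
      G.size + (Fintype.card β + ∑ a : α, (2 + 2 * (f a).length)) := by
  rw [Fin.sum_univ_add (f := fun i => (morphRule f b0 G i).size)]
  have h1 : ∀ i : Fin (Fintype.card β + Fintype.card α),
      morphRule f b0 G (Fin.castAdd G.N i) =
        Fin.addCases (fun i => .term ((Fintype.equivFin β).symm i))
          (fun i => haRule f G ((Fintype.equivFin α).symm i)) i := by
    intro i; unfold morphRule; rw [Fin.addCases_left]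
  have h2 : ∀ A : Fin G.N,
      morphRule f b0 G (Fin.natAdd (Fintype.card β + Fintype.card α) A) =
        shiftRule b0 G (G.rule A) := by
    intro A; unfold morphRule; rw [Fin.addCases_right]
  simp only [h1, h2, shiftRule_size]
  have h3 : (∑ i : Fin (Fintype.card β + Fintype.card α),
      (Fin.addCases (motive := fun _ => ISLPRule β (Fintype.card β + Fintype.card α + G.N))
        (fun i => .term ((Fintype.equivFin β).symm i))
        (fun i => haRule f G ((Fintype.equivFin α).symm i)) i).size) =
      Fintype.card β + ∑ a : α, (2 + 2 * (f a).length) := by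
    rw [Fin.sum_univ_add]
    congr 1
    · simp [ISLPRule.size]
    · have h4 : ∀ i : Fin (Fintype.card α),
        (Fin.addCases (motive := fun _ => ISLPRule β (Fintype.card β + Fintype.card α + G.N))
          (fun i => .term ((Fintype.equivFin β).symm i))
          (fun i => haRule f G ((Fintype.equivFin α).symm i))
          (Fin.natAdd (Fintype.card β) i)).size =
          2 + 2 * (f ((Fintype.equivFin α).symm i)).length := by
        intro i
        rw [Fin.addCases_right]
        simp [haRule, ISLPRule.size]
      simp only [h4]
      exact Fintype.sum_equiv (Fintype.equivFin α).symm _ _ (fun i => rfl)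
  have h5 : ∀ i : Fin (Fintype.card β + Fintype.card α),
      (Fin.addCases (motive := fun _ => ISLPRule β (Fintype.card β + Fintype.card α + G.N))
        (fun i => ISLPRule.term ((Fintype.equivFin β).symm i))
        (fun i => haRule f G ((Fintype.equivFin α).symm i)) i).size =
      (Fin.addCases (motive := fun _ => ISLPRule β (Fintype.card β + Fintype.card α + G.N))
        (fun i => ISLPRule.term ((Fintype.equivFin β).symm i))
        (fun i => haRule f G ((Fintype.equivFin α).symm i)) i).size := fun _ => rfl
  rw [h3]
  unfold ISLP.size
  omega

lemma morph_ok (hf : ∀ a, f a ≠ []) (i : Fin (Fintype.card β + Fintype.card α + G.N)) :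
    (morphRule f b0 G i).Ok d := by
  refine Fin.addCases (motive := fun i => (morphRule f b0 G i).Ok d) ?_ ?_ i
  · intro j
    refine Fin.addCases (motive := fun j =>
      (morphRule f b0 G (Fin.castAdd G.N j)).Ok d) ?_ ?_ j
    · intro k
      have : morphRule f b0 G (Fin.castAdd G.N (Fin.castAdd (Fintype.card α) k)) =
          .term ((Fintype.equivFin β).symm k) := by
        unfold morphRule; rw [Fin.addCases_left, Fin.addCases_left]
      rw [this]; trivial
    · intro k
      have : morphRule f b0 G (Fin.castAdd G.N (Fin.natAdd (Fintype.card β) k)) =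
          haRule f G ((Fintype.equivFin α).symm k) := by
        unfold morphRule; rw [Fin.addCases_left, Fin.addCases_right]
      rw [this]
      refine ⟨le_refl 1, le_refl 1, ?_, ?_⟩
      · simp [List.map_eq_nil_iff]
        exact hf _
      · intro p hp
        obtain ⟨b, hb, rfl⟩ := List.mem_map.mp hp
        exact Nat.zero_le d
  · intro A
    rw [morphRule_natAdd]
    have hok := G.ok A
    rcases hr : G.rule A with a | ⟨B, C⟩ | ⟨k1, k2, Bs⟩
    · trivial
    · trivial
    · rw [hr] at hok
      obtain ⟨h1, h2, h3, h4⟩ := hok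
      refine ⟨h1, h2, ?_, ?_⟩
      · simpa [List.map_eq_nil_iff] using h3
      · intro p hp
        obtain ⟨q, hq, rfl⟩ := List.mem_map.mp hp
        exact h4 q hq

lemma morph_acyclic (i : Fin (Fintype.card β + Fintype.card α + G.N)) :
    ∀ B ∈ (morphRule f b0 G i).vars, B < i := by
  refine Fin.addCases (motive := fun i => ∀ B ∈ (morphRule f b0 G i).vars, B < i) ?_ ?_ i
  · intro j
    refine Fin.addCases (motive := fun j =>
      ∀ B ∈ (morphRule f b0 G (Fin.castAdd G.N j)).vars, B < Fin.castAdd G.N j) ?_ ?_ j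
    · intro k
      have : morphRule f b0 G (Fin.castAdd G.N (Fin.castAdd (Fintype.card α) k)) =
          .term ((Fintype.equivFin β).symm k) := by
        unfold morphRule; rw [Fin.addCases_left, Fin.addCases_left]
      rw [this]
      intro B hB
      simp [ISLPRule.vars] at hB
    · intro k
      have heq : morphRule f b0 G (Fin.castAdd G.N (Fin.natAdd (Fintype.card β) k)) =
          haRule f G ((Fintype.equivFin α).symm k) := by
        unfold morphRule; rw [Fin.addCases_left, Fin.addCases_right]
      rw [heq]
      intro B hB
      simp only [haRule, ISLPRule.vars, List.map_map] at hB
      obtain ⟨b, hb, rfl⟩ := List.mem_map.mp hB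
      simp only [Function.comp_apply, charIdx, Fin.lt_def, Fin.coe_castAdd, Fin.coe_natAdd]
      have := (Fintype.equivFin β b).isLt
      omega
  · intro A
    rw [morphRule_natAdd]
    intro B hB
    rcases hr : G.rule A with a | ⟨X, Y⟩ | ⟨k1, k2, Bs⟩ <;> rw [hr] at hB
    · simp [shiftRule, ISLPRule.vars] at hB
    · simp only [shiftRule, ISLPRule.vars, List.mem_cons, List.not_mem_nil, or_false] at hB
      have hacy := G.acyclic A
      rw [hr] at hacy
      rcases hB with rfl | rfl
      · exact mSigma_lt_shiftIdx G (hacy X (by simp [ISLPRule.vars]))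
      · exact mSigma_lt_shiftIdx G (hacy Y (by simp [ISLPRule.vars]))
    · simp only [shiftRule, ISLPRule.vars, List.map_map] at hB
      obtain ⟨p, hp, rfl⟩ := List.mem_map.mp hB
      have hacy := G.acyclic A
      rw [hr] at hacy
      exact mSigma_lt_shiftIdx G (hacy p.1 (List.mem_map.mpr ⟨p, hp, rfl⟩))

end MorphAux

/-- For every non-erasing morphism `φ` (given by its images
`f a` on single characters and extended homomorphically, so that
`φ(T) = T.flatMap f`) there is a constant `c_φ` depending only on `φ` such
that for every `d ≥ 0`, any `d`-ISLP of size `g` generating `T` can be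
converted into a `d`-ISLP of size at most `g + c_φ` generating `φ(T)`. -/
theorem islp_morphism {α β : Type} [Fintype α] [Fintype β] (f : α → List β)
    (hf : ∀ a, f a ≠ []) :
    ∃ c : ℕ, ∀ (d : ℕ) (G : ISLP α d) (T : List α), G.Generates T →
      ∃ G' : ISLP β d, G'.Generates (T.flatMap f) ∧ G'.size ≤ G.size + c := by
  classical
  refine ⟨Fintype.card β + ∑ a : α, (2 + 2 * (f a).length), ?_⟩
  intro d G T hGen
  have hα : Nonempty α := expands_nonempty G.ok hGen
  obtain ⟨a0⟩ := hα
  have b0 : β := (f a0).head (hf a0)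
  refine ⟨⟨Fintype.card β + Fintype.card α + G.N, morphRule f b0 G, mSigma G G.start,
      morph_ok f b0 G hf, morph_acyclic f b0 G⟩, ?_, ?_⟩
  · exact expands_mSigma f b0 G hGen
  · rw [ISLP.size]
    exact le_of_eq (morph_size f b0 G)
end

section
/- There exists a universal constant C such that for every integer d ≥ 0, every d-ISLP of size g generating a string T, and every nonempty string T' obtained from T by a single edit operation (substitution of one character, insertion of one character, or deletion of one character), there exists a d-ISLP of size at most C·g generating T'. -/
/-- `T'` is obtained from `T` by a single edit operation: substitution,
insertion, or deletion of one character. -/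
def IsEdit {α : Type} (T T' : List α) : Prop :=
  (∃ (u v : List α) (x y : α), T = u ++ x :: v ∧ T' = u ++ y :: v) ∨
  (∃ (u v : List α) (y : α), T = u ++ v ∧ T' = u ++ y :: v) ∨
  (∃ (u v : List α) (x : α), T = u ++ x :: v ∧ T' = u ++ v)

theorem List.exists_of_flatten_eq_append {β : Type*} {xss : List (List β)} {x y : List β}
    (hne : xss ≠ []) (h : xss.flatten = x ++ y) :
    ∃ as u v bs, xss = as ++ (u ++ v) :: bs ∧ x = as.flatten ++ u ∧ y = v ++ bs.flatten := by
  rcases List.flatten_eq_append_iff.1 h with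
    ⟨as, bs, rfl, rfl, rfl⟩ | ⟨as, bs, c, cs, ds, rfl, rfl, rfl⟩
  · rcases bs with _ | ⟨b, bs⟩
    · obtain ⟨as, a, rfl⟩ := (List.eq_nil_or_concat' as).resolve_left (by simpa using hne)
      exact ⟨as, a, [], [], by simp, by simp, by simp⟩
    · exact ⟨as, [], b, bs, by simp, by simp, by simp⟩
  · exact ⟨as, bs, c :: cs, ds, rfl, rfl, by simp⟩

theorem List.exists_of_flatten_map_eq_append {β γ : Type*} {f : β → List γ} {l : List β}
    {x y : List γ} (hne : l ≠ []) (h : (l.map f).flatten = x ++ y) :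
    ∃ l₁ b l₂ u v, l = l₁ ++ b :: l₂ ∧ f b = u ++ v ∧
      x = (l₁.map f).flatten ++ u ∧ y = v ++ (l₂.map f).flatten := by
  obtain ⟨as, u, v, bs, hl, rfl, rfl⟩ := List.exists_of_flatten_eq_append (by simpa using hne) h
  obtain ⟨l₁, l', rfl, rfl, hl'⟩ := List.map_eq_append_iff.1 hl
  obtain ⟨b, l₂, rfl, hb, rfl⟩ := List.map_eq_cons_iff.1 hl'
  exact ⟨l₁, b, l₂, u, v, rfl, hb, rfl, rfl⟩

theorem List.forall₂_append_cons_right {β γ : Type*} {R : β → γ → Prop} {l : List β}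
    {l₁ l₂ : List γ} {b : γ} (h : Forall₂ R l (l₁ ++ b :: l₂)) :
    ∃ l₁' a l₂', l = l₁' ++ a :: l₂' ∧ Forall₂ R l₁' l₁ ∧ R a b ∧ Forall₂ R l₂' l₂ := by
  have hdrop := List.forall₂_drop_append l l₁ (b :: l₂) h
  obtain ⟨a, l₂', hab, h₂, hl⟩ := List.forall₂_cons_right_iff.1 hdrop
  refine ⟨l.take l₁.length, a, l₂', ?_, List.forall₂_take_append l l₁ (b :: l₂) h, hab, h₂⟩
  rw [← hl, List.take_append_drop]

theorem List.forall₂_iff_map_snd_eq_and_zip {β γ δ : Type*} {P : β → γ → Prop}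
    {Bs : List (β × δ)} {ps : List (γ × δ)} :
    Forall₂ (fun B p => P B.1 p.1 ∧ B.2 = p.2) Bs ps ↔
      ps.map Prod.snd = Bs.map Prod.snd ∧ ∀ q ∈ Bs.zip ps, P q.1.1 q.2.1 := by
  induction Bs generalizing ps with
  | nil => cases ps <;> simp
  | cons B Bs ih =>
    cases ps with
    | nil => simp
    | cons p ps => simp [ih, eq_comm, and_assoc, and_left_comm]

theorem repList_eq_append {α : Type} {w x y : List α} {e : ℕ} (he : 1 ≤ e)
    (h : repList w e = x ++ y) :
    ∃ r r' u v, w = u ++ v ∧ x = repList w r ++ u ∧ y = v ++ repList w r' := by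
  obtain ⟨as, u, v, bs, hl, rfl, rfl⟩ :=
    List.exists_of_flatten_eq_append (by simp; omega) h
  obtain ⟨-, has, hbs⟩ := List.replicate_eq_append_iff.1 hl
  simp only [List.length_cons, List.replicate_succ, List.cons.injEq] at hbs
  obtain ⟨huv, hbs⟩ := hbs
  generalize as.length = r at has
  generalize bs.length = r' at hbs
  subst has hbs huv
  exact ⟨r, r', u, v, rfl, rfl, rfl⟩

theorem rangeK_of_le {k1 k2 : ℕ} (h : k1 ≤ k2) : rangeK k1 k2 = List.range' k1 (k2 + 1 - k1) := by
  rw [rangeK, if_pos h, List.range'_eq_map_range]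

theorem rangeK_of_ge {k1 k2 : ℕ} (h : k2 ≤ k1) :
    rangeK k1 k2 = (List.range' k2 (k1 + 1 - k2)).reverse := by
  rw [List.reverse_range', show k2 + (k1 + 1 - k2) - 1 = k1 by omega]
  rcases h.eq_or_lt with rfl | h
  · simp [rangeK]
  · rw [rangeK, if_neg (by omega)]

theorem rangeK_ne_nil (k1 k2 : ℕ) : rangeK k1 k2 ≠ [] := by
  rcases le_total k1 k2 with h | h
  · rw [rangeK_of_le h, ne_eq, List.range'_eq_nil_iff]; omega
  · rw [rangeK_of_ge h, ne_eq, List.reverse_eq_nil_iff, List.range'_eq_nil_iff]; omega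

def IsIterRange (R : List ℕ) : Prop := R = [] ∨ ∃ a b, 1 ≤ a ∧ 1 ≤ b ∧ R = rangeK a b

theorem isIterRange_range' {s : ℕ} (hs : 1 ≤ s) (m : ℕ) : IsIterRange (List.range' s m) := by
  rcases Nat.eq_zero_or_pos m with rfl | hm
  · exact .inl rfl
  · exact .inr ⟨s, s + m - 1, hs, by omega, by rw [rangeK_of_le (by omega)]; congr; omega⟩

theorem isIterRange_reverse_range' {s : ℕ} (hs : 1 ≤ s) (m : ℕ) :
    IsIterRange (List.range' s m).reverse := by
  rcases Nat.eq_zero_or_pos m with rfl | hm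
  · exact .inl rfl
  · exact .inr ⟨s + m - 1, s, by omega, hs, by rw [rangeK_of_ge (by omega)]; congr; omega⟩

theorem range'_eq_append_cons {s m i : ℕ} {R₁ R₂ : List ℕ}
    (h : List.range' s m = R₁ ++ i :: R₂) :
    s ≤ i ∧ R₁ = List.range' s (i - s) ∧ R₂ = List.range' (i + 1) (m - (i - s) - 1) := by
  obtain ⟨k, -, rfl, hk⟩ := List.range'_eq_append_iff.1 h
  obtain ⟨rfl, -, rfl⟩ := List.range'_eq_cons_iff.1 hk.symm
  simp

theorem rangeK_eq_append_cons {k1 k2 i : ℕ} {R₁ R₂ : List ℕ} (hk1 : 1 ≤ k1) (hk2 : 1 ≤ k2)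
    (h : rangeK k1 k2 = R₁ ++ i :: R₂) : 1 ≤ i ∧ IsIterRange R₁ ∧ IsIterRange R₂ := by
  rcases le_total k1 k2 with hk | hk
  · rw [rangeK_of_le hk] at h
    obtain ⟨hi, rfl, rfl⟩ := range'_eq_append_cons h
    exact ⟨by omega, isIterRange_range' hk1 _, isIterRange_range' (by omega) _⟩
  · rw [rangeK_of_ge hk, List.reverse_eq_iff, List.reverse_append, List.reverse_cons,
      List.append_assoc, List.singleton_append] at h
    obtain ⟨hi, h₂, h₁⟩ := range'_eq_append_cons h
    rw [← List.reverse_reverse R₁, ← List.reverse_reverse R₂, h₁, h₂]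
    exact ⟨by omega, isIterRange_reverse_range' (by omega) _, isIterRange_reverse_range' hk2 _⟩

theorem iterExpand_self {α : Type} (i : ℕ) (ps : List (List α × ℕ)) :
    iterExpand i i ps = iterBlock ps i := by
  simp [iterExpand, rangeK]

theorem iterExpand_one_singleton {α : Type} (w : List α) {r : ℕ} (hr : 1 ≤ r) :
    iterExpand 1 r [(w, 0)] = repList w r := by
  have : (rangeK 1 r).map (iterBlock [(w, 0)]) = List.replicate r w := by
    rw [List.eq_replicate_iff]
    refine ⟨by simp [rangeK_of_le hr], fun v hv => ?_⟩
    obtain ⟨i, -, rfl⟩ := List.mem_map.1 hv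
    simp [iterBlock, repList]
  rw [iterExpand, this, repList]

namespace ISLPRule

variable {α : Type} {N M : ℕ}

def map (f : Fin N → Fin M) : ISLPRule α N → ISLPRule α M
  | .term a => .term a
  | .pair B C => .pair (f B) (f C)
  | .iter k1 k2 Bs => .iter k1 k2 (Bs.map (Prod.map f id))

@[simp] theorem vars_map (f : Fin N → Fin M) (r : ISLPRule α N) :
    (r.map f).vars = r.vars.map f := by
  cases r <;> simp [map, vars]

@[simp] theorem size_map (f : Fin N → Fin M) (r : ISLPRule α N) : (r.map f).size = r.size := by
  cases r <;> simp [map, size]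

theorem Ok.map {d : ℕ} {r : ISLPRule α N} (h : r.Ok d) (f : Fin N → Fin M) : (r.map f).Ok d := by
  cases r with
  | iter k1 k2 Bs =>
    obtain ⟨h1, h2, h3, h4⟩ := h
    refine ⟨h1, h2, by simpa [map] using h3, fun p hp => ?_⟩
    obtain ⟨q, hq, rfl⟩ := List.mem_map.1 hp
    exact h4 q hq
  | _ => trivial

theorem one_le_size (r : ISLPRule α N) : 1 ≤ r.size := by
  cases r <;> simp only [size] <;> omega

end ISLPRule

namespace ISLP

variable {α : Type} {d : ℕ}

theorem Expands.map {N M : ℕ} {rule : Fin N → ISLPRule α N} {rule' : Fin M → ISLPRule α M}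
    {f : Fin N → Fin M} (hf : ∀ A, rule' (f A) = (rule A).map f) {A : Fin N} {w : List α}
    (h : Expands rule A w) : Expands rule' (f A) w := by
  induction h with
  | term hA => exact .term (by rw [hf, hA]; rfl)
  | pair hA _ _ ihu ihv => exact .pair (by rw [hf, hA]; rfl) ihu ihv
  | iter hA hsnd _ ih =>
    refine .iter (by rw [hf, hA]; rfl) (by simpa [Function.comp_def] using hsnd) fun q hq => ?_
    rw [List.zip_map_left] at hq
    obtain ⟨q', hq', rfl⟩ := List.mem_map.1 hq
    exact ih q' hq'

theorem Expands.iter_of_forall₂ {N : ℕ} {rule : Fin N → ISLPRule α N} {A : Fin N} {k1 k2 : ℕ}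
    {Bs : List (Fin N × ℕ)} {ps : List (List α × ℕ)} (hA : rule A = .iter k1 k2 Bs)
    (h : List.Forall₂ (fun B p => Expands rule B.1 p.1 ∧ B.2 = p.2) Bs ps) :
    Expands rule A (iterExpand k1 k2 ps) :=
  have ⟨hsnd, hzip⟩ := List.forall₂_iff_map_snd_eq_and_zip.1 h
  .iter hA hsnd hzip

def snoc (H : ISLP α d) (r : ISLPRule α H.N) (hr : r.Ok d) : ISLP α d where
  N := H.N + 1
  rule := Fin.snoc (fun A => (H.rule A).map Fin.castSucc) (r.map Fin.castSucc)
  start := Fin.last H.N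
  ok A := by
    induction A using Fin.lastCases with
    | last => simpa using hr.map Fin.castSucc
    | cast A => simpa using (H.ok A).map Fin.castSucc
  acyclic A B hB := by
    induction A using Fin.lastCases with
    | last =>
      simp only [Fin.snoc_last, ISLPRule.vars_map, List.mem_map] at hB
      obtain ⟨B, -, rfl⟩ := hB
      exact Fin.castSucc_lt_last B
    | cast A =>
      simp only [Fin.snoc_castSucc, ISLPRule.vars_map, List.mem_map] at hB
      obtain ⟨B, hB, rfl⟩ := hB
      exact Fin.castSucc_lt_castSucc_iff.2 (H.acyclic A B hB)

section Snoc

variable (H : ISLP α d) (r : ISLPRule α H.N) (hr : r.Ok d)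

@[simp] theorem snoc_rule_castSucc (A : Fin H.N) :
    (H.snoc r hr).rule A.castSucc = (H.rule A).map Fin.castSucc := by
  simp only [snoc, Fin.snoc_castSucc]

@[simp] theorem snoc_rule_last : (H.snoc r hr).rule (Fin.last H.N) = r.map Fin.castSucc := by
  simp only [snoc, Fin.snoc_last]

theorem size_snoc : (H.snoc r hr).size = H.size + r.size := by
  change ∑ A : Fin (H.N + 1), ((H.snoc r hr).rule A).size = _
  rw [Fin.sum_univ_castSucc]
  simp only [snoc_rule_castSucc, snoc_rule_last]
  exact congrArg₂ (· + ·) (Finset.sum_congr rfl fun A _ => ISLPRule.size_map _ _)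
    (ISLPRule.size_map _ _)

variable {H r hr}

theorem Expands.snoc {A : Fin H.N} {w : List α} (h : Expands H.rule A w) :
    Expands (H.snoc r hr).rule A.castSucc w :=
  h.map (snoc_rule_castSucc H r hr)

end Snoc

def Embeds (G H : ISLP α d) : Prop :=
  ∀ A : Fin G.N, ∃ B : Fin H.N, ∀ w, Expands G.rule A w → Expands H.rule B w

theorem Embeds.refl (G : ISLP α d) : G.Embeds G := fun A => ⟨A, fun _ => id⟩

theorem Embeds.trans {G H K : ISLP α d} (hGH : G.Embeds H) (hHK : H.Embeds K) : G.Embeds K := by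
  intro A
  obtain ⟨B, hB⟩ := hGH A
  obtain ⟨C, hC⟩ := hHK B
  exact ⟨C, fun w h => hC w (hB w h)⟩

theorem embeds_snoc (H : ISLP α d) (r : ISLPRule α H.N) (hr : r.Ok d) : H.Embeds (H.snoc r hr) :=
  fun A => ⟨A.castSucc, fun _ => Expands.snoc⟩

def sizeUpTo (G : ISLP α d) (A : Fin G.N) : ℕ := ∑ B ∈ Finset.Iic A, (G.rule B).size

theorem sizeUpTo_le_size (G : ISLP α d) (A : Fin G.N) : G.sizeUpTo A ≤ G.size :=
  Finset.sum_le_sum_of_subset (Finset.subset_univ _)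

theorem size_rule_le_sizeUpTo (G : ISLP α d) (A : Fin G.N) : (G.rule A).size ≤ G.sizeUpTo A :=
  Finset.single_le_sum (f := fun B => (G.rule B).size) (fun _ _ => Nat.zero_le _)
    (Finset.mem_Iic.2 le_rfl)

theorem sizeUpTo_add_size_rule_le (G : ISLP α d) {A B : Fin G.N} (h : B < A) :
    G.sizeUpTo B + (G.rule A).size ≤ G.sizeUpTo A := by
  have hA : G.sizeUpTo A = (G.rule A).size + ∑ C ∈ Finset.Iio A, (G.rule C).size := by
    rw [sizeUpTo, ← Finset.Iio_insert, Finset.sum_insert Finset.notMem_Iio_self]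
  rw [hA, add_comm]
  refine Nat.add_le_add_left (Finset.sum_le_sum_of_subset fun C hC => ?_) _
  exact Finset.mem_Iio.2 ((Finset.mem_Iic.1 hC).trans_lt h)

theorem one_le_size (G : ISLP α d) : 1 ≤ G.size :=
  ((G.rule G.start).one_le_size.trans (G.size_rule_le_sizeUpTo _)).trans (G.sizeUpTo_le_size _)

/-- `G.Buildable c w`: some ISLP obtained from `G` by adding rules of total size at most `c`
has a variable expanding to `w`, unless `w = []`. -/
inductive Buildable (G : ISLP α d) : ℕ → List α → Prop
  | nil : G.Buildable 0 []
  | var {A : Fin G.N} {w : List α} : Expands G.rule A w → G.Buildable 0 w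
  | term (a : α) : G.Buildable 1 [a]
  | append {c₁ c₂ : ℕ} {u v : List α} :
      G.Buildable c₁ u → G.Buildable c₂ v → G.Buildable (c₁ + c₂ + 2) (u ++ v)
  | iter {k1 k2 : ℕ} {Bs : List (Fin G.N × ℕ)} {ps : List (List α × ℕ)} :
      (ISLPRule.iter k1 k2 Bs : ISLPRule α G.N).Ok d →
      List.Forall₂ (fun B p => Expands G.rule B.1 p.1 ∧ B.2 = p.2) Bs ps →
      G.Buildable (2 + 2 * Bs.length) (iterExpand k1 k2 ps)
  | mono {c c' : ℕ} {w : List α} : G.Buildable c w → c ≤ c' → G.Buildable c' w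

namespace Buildable

variable {G : ISLP α d}

theorem exists_embeds {c : ℕ} {w : List α} (hw : G.Buildable c w) (H : ISLP α d)
    (hGH : G.Embeds H) :
    ∃ H' : ISLP α d, H.Embeds H' ∧ H'.size ≤ H.size + c ∧
      (w = [] ∨ ∃ s, Expands H'.rule s w) := by
  induction hw generalizing H with
  | nil => exact ⟨H, .refl H, by omega, .inl rfl⟩
  | var hA =>
    obtain ⟨B, hB⟩ := hGH _
    exact ⟨H, .refl H, by omega, .inr ⟨B, hB _ hA⟩⟩
  | term a =>
    exact ⟨H.snoc (.term a) trivial, embeds_snoc _ _ _, (size_snoc ..).le,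
      .inr ⟨Fin.last H.N, .term (snoc_rule_last ..)⟩⟩
  | @append c₁ c₂ u v _ _ ihu ihv =>
    obtain ⟨H₁, hH₁, hsize₁, hu⟩ := ihu H hGH
    obtain ⟨H₂, hH₂, hsize₂, hv⟩ := ihv H₁ (hGH.trans hH₁)
    have hHH₂ := hH₁.trans hH₂
    rcases hu with rfl | ⟨s₁, hs₁⟩
    · exact ⟨H₂, hHH₂, by omega, hv⟩
    obtain ⟨s₁, hs₁⟩ := (hH₂ s₁).imp fun _ h => h _ hs₁
    rcases hv with rfl | ⟨s₂, hs₂⟩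
    · exact ⟨H₂, hHH₂, by omega, .inr ⟨s₁, by simpa using hs₁⟩⟩
    have hsize := size_snoc H₂ (.pair s₁ s₂) trivial
    refine ⟨H₂.snoc (.pair s₁ s₂) trivial, hHH₂.trans (embeds_snoc _ _ _), ?_,
      .inr ⟨Fin.last H₂.N, .pair (snoc_rule_last ..) hs₁.snoc hs₂.snoc⟩⟩
    simp only [ISLPRule.size] at hsize
    omega
  | @iter k1 k2 Bs ps hok hBs =>
    choose ι hι using hGH
    let r : ISLPRule α H.N := (ISLPRule.iter k1 k2 Bs).map ι
    refine ⟨H.snoc r (hok.map ι), embeds_snoc _ _ _, ?_, .inr ⟨Fin.last H.N, ?_⟩⟩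
    · rw [size_snoc, ISLPRule.size_map]
      rfl
    · refine .iter_of_forall₂ (snoc_rule_last ..) ?_
      refine List.forall₂_map_left_iff.2 (List.forall₂_map_left_iff.2 ?_)
      exact hBs.imp fun B p ⟨hB, hc⟩ => ⟨(hι _ _ hB).snoc, hc⟩
  | mono _ hc ih =>
    obtain ⟨H', hH', hsize, hw⟩ := ih H hGH
    exact ⟨H', hH', by omega, hw⟩

theorem exists_generates {c : ℕ} {w : List α} (hw : G.Buildable c w) (hne : w ≠ []) :
    ∃ G' : ISLP α d, G'.Generates w ∧ G'.size ≤ G.size + c := by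
  obtain ⟨H, -, hsize, hw⟩ := hw.exists_embeds G (.refl G)
  obtain ⟨s, hs⟩ := hw.resolve_left hne
  exact ⟨{ H with start := s }, hs, hsize⟩

end Buildable

section Splitting

variable {G : ISLP α d}

theorem buildable_of_length_le_one {w : List α} (hw : w.length ≤ 1) : G.Buildable 1 w :=
  match w, hw with
  | [], _ => .mono .nil zero_le_one
  | [a], _ => .term a

theorem buildable_repList {B : Fin G.N} {w : List α} (hB : Expands G.rule B w) (r : ℕ) :
    G.Buildable 4 (repList w r) := by
  rcases Nat.eq_zero_or_pos r with rfl | hr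
  · exact .mono .nil (Nat.zero_le _)
  · rw [← iterExpand_one_singleton w hr]
    exact .iter (Bs := [(B, 0)]) ⟨le_rfl, hr, by simp, by simp⟩ (.cons ⟨hB, rfl⟩ .nil)

theorem buildable_iterBlock {i : ℕ} (hi : 1 ≤ i) {Bs : List (Fin G.N × ℕ)}
    {ps : List (List α × ℕ)} (hd : ∀ B ∈ Bs, B.2 ≤ d)
    (hBs : List.Forall₂ (fun B p => Expands G.rule B.1 p.1 ∧ B.2 = p.2) Bs ps) :
    G.Buildable (2 + 2 * Bs.length) (iterBlock ps i) := by
  rcases eq_or_ne Bs [] with rfl | hne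
  · rw [List.forall₂_nil_left_iff.1 hBs]
    exact .mono .nil (Nat.zero_le _)
  · rw [← iterExpand_self]
    exact .iter ⟨hi, hi, hne, hd⟩ hBs

theorem buildable_of_isIterRange {R : List ℕ} (hR : IsIterRange R) {Bs : List (Fin G.N × ℕ)}
    {ps : List (List α × ℕ)} (hne : Bs ≠ []) (hd : ∀ B ∈ Bs, B.2 ≤ d)
    (hBs : List.Forall₂ (fun B p => Expands G.rule B.1 p.1 ∧ B.2 = p.2) Bs ps) :
    G.Buildable (2 + 2 * Bs.length) (R.map (iterBlock ps)).flatten := by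
  rcases hR with rfl | ⟨a, b, ha, hb, rfl⟩
  · exact .mono .nil (Nat.zero_le _)
  · exact .iter ⟨ha, hb, hne, hd⟩ hBs

def Splittable (G : ISLP α d) (c : ℕ) (w : List α) : Prop :=
  ∀ u v, w = u ++ v → G.Buildable c u ∧ G.Buildable c v

theorem Splittable.mono {c c' : ℕ} {w : List α} (h : G.Splittable c w) (hc : c ≤ c') :
    G.Splittable c' w :=
  fun u v huv => (h u v huv).imp (·.mono hc) (·.mono hc)

theorem splittable_of_length_le_one {w : List α} (hw : w.length ≤ 1) : G.Splittable 1 w := by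
  intro u v h
  have := congrArg List.length h
  rw [List.length_append] at this
  exact ⟨buildable_of_length_le_one (by omega), buildable_of_length_le_one (by omega)⟩

theorem Splittable.append {c : ℕ} {u v : List α} (hu : G.Splittable c u) (hv : G.Splittable c v)
    (hu₀ : G.Buildable 0 u) (hv₀ : G.Buildable 0 v) : G.Splittable (c + 2) (u ++ v) := by
  intro x y h
  rcases List.append_eq_append_iff.1 h with ⟨a, rfl, rfl⟩ | ⟨b, rfl, rfl⟩
  · obtain ⟨ha, hy⟩ := hv a y rfl
    exact ⟨(hu₀.append ha).mono (by omega), hy.mono (by omega)⟩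
  · obtain ⟨hx, hb⟩ := hu x b rfl
    exact ⟨hx.mono (by omega), (hb.append hv₀).mono (by omega)⟩

theorem splittable_iterExpand {k1 k2 c : ℕ} {Bs : List (Fin G.N × ℕ)} {ps : List (List α × ℕ)}
    (hok : (ISLPRule.iter k1 k2 Bs : ISLPRule α G.N).Ok d)
    (hBs : List.Forall₂
      (fun B p => (Expands G.rule B.1 p.1 ∧ G.Splittable c p.1) ∧ B.2 = p.2) Bs ps) :
    G.Splittable (c + 4 * Bs.length + 14) (iterExpand k1 k2 ps) := by
  obtain ⟨hk1, hk2, hne, hd⟩ := hok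
  have hExp : List.Forall₂ (fun B p => Expands G.rule B.1 p.1 ∧ B.2 = p.2) Bs ps :=
    hBs.imp fun _ _ h => ⟨h.1.1, h.2⟩
  intro x y h
  obtain ⟨R₁, i, R₂, x₁, y₁, hR, hi, rfl, rfl⟩ :=
    List.exists_of_flatten_map_eq_append (rangeK_ne_nil k1 k2) h
  obtain ⟨hi1, hR₁, hR₂⟩ := rangeK_eq_append_cons hk1 hk2 hR
  obtain ⟨ps₁, p, ps₂, x₂, y₂, rfl, hp, rfl, rfl⟩ := List.exists_of_flatten_map_eq_append
    (by rintro rfl; exact hne (List.forall₂_nil_right_iff.1 hBs)) hi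
  obtain ⟨Bs₁, B, Bs₂, rfl, h₁, ⟨⟨hB, hsplit⟩, -⟩, h₂⟩ := List.forall₂_append_cons_right hBs
  obtain ⟨r, r', x₃, y₃, hxy, rfl, rfl⟩ := repList_eq_append (Nat.one_le_pow _ _ hi1) hp
  obtain ⟨hx₃, hy₃⟩ := hsplit x₃ y₃ hxy
  have hrun₁ := buildable_of_isIterRange hR₁ hne hd hExp
  have hrun₂ := buildable_of_isIterRange hR₂ hne hd hExp
  have hblock₁ := buildable_iterBlock hi1 (fun B hB => hd B (by simp [hB]))
    (h₁.imp fun _ _ h => ⟨h.1.1, h.2⟩)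
  have hblock₂ := buildable_iterBlock hi1 (fun B hB => hd B (by simp [hB]))
    (h₂.imp fun _ _ h => ⟨h.1.1, h.2⟩)
  have hpow₁ := buildable_repList hB r
  have hpow₂ := buildable_repList hB r'
  simp only [List.length_append, List.length_cons] at hrun₁ hrun₂ ⊢
  exact ⟨(hrun₁.append (hblock₁.append (hpow₁.append hx₃))).mono (by omega),
    ((((hy₃.append hpow₂).append hblock₂).append hrun₂)).mono (by omega)⟩

theorem Expands.splittable {A : Fin G.N} {w : List α} (h : Expands G.rule A w) :
    G.Splittable (7 * G.sizeUpTo A) w := by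
  induction h with
  | @term A a hA =>
    have := G.size_rule_le_sizeUpTo A
    rw [hA] at this
    simp only [ISLPRule.size] at this
    exact (splittable_of_length_le_one (by simp)).mono (by omega)
  | @pair A B C u v hA hu hv ihu ihv =>
    have hB := G.sizeUpTo_add_size_rule_le (G.acyclic A B (by simp [hA, ISLPRule.vars]))
    have hC := G.sizeUpTo_add_size_rule_le (G.acyclic A C (by simp [hA, ISLPRule.vars]))
    rw [hA] at hB hC
    simp only [ISLPRule.size] at hB hC
    exact ((ihu.mono (c' := 7 * (G.sizeUpTo A - 2)) (by omega)).append
      (ihv.mono (by omega)) (.var hu) (.var hv)).mono (by omega)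
  | @iter A k1 k2 Bs ps hA hsnd hzip ih =>
    have hok := G.ok A
    have hA₀ := G.size_rule_le_sizeUpTo A
    rw [hA] at hok hA₀
    simp only [ISLPRule.size] at hA₀
    have hsize (B : Fin G.N × ℕ) (hB : B ∈ Bs) :
        G.sizeUpTo B.1 + (2 + 2 * Bs.length) ≤ G.sizeUpTo A := by
      have := G.sizeUpTo_add_size_rule_le
        (G.acyclic A B.1 (by rw [hA]; exact List.mem_map_of_mem hB))
      rwa [hA] at this
    set c := 7 * (G.sizeUpTo A - (2 + 2 * Bs.length))
    have hBs := List.forall₂_iff_map_snd_eq_and_zip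
      (P := fun B w => Expands G.rule B w ∧ G.Splittable c w)
      |>.2 ⟨hsnd, fun q hq => ⟨hzip q hq, (ih q hq).mono (by
        have := hsize q.1 (List.of_mem_zip hq).1; omega)⟩⟩
    exact (splittable_iterExpand hok hBs).mono (by omega)

end Splitting

end ISLP

theorem IsEdit.exists_eq_append {α : Type} {T T' : List α} (h : IsEdit T T') :
    ∃ u x m v : List α, T = u ++ (x ++ v) ∧ T' = u ++ (m ++ v) ∧ m.length ≤ 1 := by
  rcases h with ⟨u, v, x, y, rfl, rfl⟩ | ⟨u, v, y, rfl, rfl⟩ | ⟨u, v, x, rfl, rfl⟩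
  · exact ⟨u, [x], [y], v, rfl, rfl, le_rfl⟩
  · exact ⟨u, [], [y], v, rfl, rfl, le_rfl⟩
  · exact ⟨u, [x], [], v, rfl, rfl, zero_le_one⟩

/-- There is a universal constant `C` such that for every
`d ≥ 0`, every `d`-ISLP of size `g` generating `T`, and every nonempty `T'`
at edit distance one from `T`, some `d`-ISLP of size at most `C·g`
generates `T'`. -/
theorem islp_edit :
    ∃ C : ℕ, ∀ (α : Type) [Fintype α] (d : ℕ) (G : ISLP α d) (T T' : List α),
      G.Generates T → IsEdit T T' → T' ≠ [] →
      ∃ G' : ISLP α d, G'.Generates T' ∧ G'.size ≤ C * G.size := by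
  refine ⟨20, fun α _ d G T T' hT hedit hne => ?_⟩
  obtain ⟨u, x, m, v, rfl, rfl, hm⟩ := hedit.exists_eq_append
  have hsplit : G.Splittable (7 * G.size) (u ++ (x ++ v)) :=
    (ISLP.Expands.splittable hT).mono (by have := G.sizeUpTo_le_size G.start; omega)
  have hu := (hsplit u (x ++ v) rfl).1
  have hv := (hsplit (u ++ x) v (List.append_assoc ..).symm).2
  have hT' := hu.append ((ISLP.buildable_of_length_le_one hm).append hv)
  obtain ⟨G', hG', hsize⟩ := hT'.exists_generates hne
  exact ⟨G', hG', by have := G.one_le_size; omega⟩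
end
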